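/- arXiv:1912.01392 — 3 statements merged into one kernel-verified Lean document; each statement's English description precedes it below -/
import Mathlib

section
/- Let (H, Δ, Δ') be a Hopf brace with antipode S for Δ, and set ρ(h) = h_{(-1)} ⊗ h_{(0)} = S(h_1) h_{21'} ⊗ h_{22'}. Then for all h ∈ H: h_{1'} ⊗ h_{2'} = h_1 h_{2(-1)} ⊗ h_{2(0)}, i.e. Δ'(h) = (m ⊗ id)(id ⊗ ρ)Δ(h). -/
open TensorProduct

noncomputable section

namespace HopfPaper

/-- A Hopf algebra structure (comultiplication `Δ`, counit `ε`, antipode `S`) on a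
given `k`-algebra `H`, expressed in terms of `k`-linear maps.  Together with the
algebra structure of `H` this is exactly the data of a Hopf algebra
`(H, m, 1, Δ, ε, S)` over the field `k`. -/
structure HopfStruct (k : Type*) [Field k] (H : Type*) [Ring H] [Algebra k H] where
  /-- the comultiplication -/
  Δ : H →ₗ[k] H ⊗[k] H
  /-- the counit -/
  ε : H →ₗ[k] k
  /-- the antipode -/
  S : H →ₗ[k] H
  coassoc : ∀ h : H,
    TensorProduct.map (LinearMap.id : H →ₗ[k] H) Δ (Δ h)
      = TensorProduct.assoc k H H H
          (TensorProduct.map Δ (LinearMap.id : H →ₗ[k] H) (Δ h))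
  counit_left : ∀ h : H,
    TensorProduct.lid k H (TensorProduct.map ε (LinearMap.id : H →ₗ[k] H) (Δ h)) = h
  counit_right : ∀ h : H,
    TensorProduct.rid k H (TensorProduct.map (LinearMap.id : H →ₗ[k] H) ε (Δ h)) = h
  comul_mul : ∀ a b : H, Δ (a * b) = Δ a * Δ b
  comul_one : Δ 1 = 1
  counit_mul : ∀ a b : H, ε (a * b) = ε a * ε b
  counit_one : ε 1 = 1
  antipode_left : ∀ h : H,
    LinearMap.mul' k H (TensorProduct.map S (LinearMap.id : H →ₗ[k] H) (Δ h))
      = algebraMap k H (ε h)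
  antipode_right : ∀ h : H,
    LinearMap.mul' k H (TensorProduct.map (LinearMap.id : H →ₗ[k] H) S (Δ h))
      = algebraMap k H (ε h)

variable (k : Type*) [Field k]

/-- `m ↦ m ⊗ 1`. -/
def ι₁ (M N : Type*) [Ring M] [Algebra k M] [Ring N] [Algebra k N] :
    M →ₗ[k] M ⊗[k] N :=
  (TensorProduct.mk k M N).flip 1

/-- `n ↦ 1 ⊗ n`. -/
def ι₂ (M N : Type*) [Ring M] [Algebra k M] [Ring N] [Algebra k N] :
    N →ₗ[k] M ⊗[k] N :=
  TensorProduct.mk k M N 1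

/-- multiplication of three factors, `x ⊗ (y ⊗ z) ↦ x * y * z`. -/
def mul₃ (T : Type*) [Ring T] [Algebra k T] : T ⊗[k] (T ⊗[k] T) →ₗ[k] T :=
  (LinearMap.mul' k T).comp
    (TensorProduct.map (LinearMap.id : T →ₗ[k] T) (LinearMap.mul' k T))

/-- multiplication of four factors. -/
def mul₄ (T : Type*) [Ring T] [Algebra k T] :
    T ⊗[k] (T ⊗[k] (T ⊗[k] T)) →ₗ[k] T :=
  (LinearMap.mul' k T).comp
    (TensorProduct.map (LinearMap.id : T →ₗ[k] T) (mul₃ k T))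

/-- The left hand side `h_{1'} ⊗ h_{2'1} ⊗ h_{2'2}` of the Hopf brace compatibility
condition (2.1), i.e. `(id ⊗ Δ) ∘ Δ'`. -/
def braceLHS (H : Type*) [Ring H] [Algebra k H] (Δ Δ' : H →ₗ[k] H ⊗[k] H) :
    H →ₗ[k] H ⊗[k] (H ⊗[k] H) :=
  (TensorProduct.map (LinearMap.id : H →ₗ[k] H) Δ).comp Δ'

/-- The right hand side `h_{11'}S(h_2)h_{31'} ⊗ h_{12'} ⊗ h_{32'}` of the Hopf brace
compatibility condition (2.1):  it is obtained from the twofold comultiplication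
`h ↦ h_1 ⊗ (h_2 ⊗ h_3)` (using `Δ`) by applying `Δ'` to the first and third legs,
`S` to the middle leg, placing the results in the appropriate tensor positions of
`H ⊗ (H ⊗ H)` (filled with `1`s) and multiplying. -/
def braceRHS (H : Type*) [Ring H] [Algebra k H] (Δ Δ' : H →ₗ[k] H ⊗[k] H)
    (S : H →ₗ[k] H) : H →ₗ[k] H ⊗[k] (H ⊗[k] H) :=
  (mul₃ k (H ⊗[k] (H ⊗[k] H))).comp
    ((TensorProduct.map
        ((TensorProduct.map (LinearMap.id : H →ₗ[k] H) (ι₁ k H H)).comp Δ')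
        (TensorProduct.map ((ι₁ k H (H ⊗[k] H)).comp S)
          ((TensorProduct.map (LinearMap.id : H →ₗ[k] H) (ι₂ k H H)).comp Δ'))).comp
      ((TensorProduct.map (LinearMap.id : H →ₗ[k] H) Δ).comp Δ))

/-- A Hopf brace on the `k`-algebra `H` : two Hopf algebra structures sharing the
multiplication and unit of `H`, subject to the compatibility condition (2.1):
`h_{1'} ⊗ h_{2'1} ⊗ h_{2'2} = h_{11'}S(h_2)h_{31'} ⊗ h_{12'} ⊗ h_{32'}`. -/
structure HopfBrace (H : Type*) [Ring H] [Algebra k H] where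
  fst : HopfStruct k H
  snd : HopfStruct k H
  compat : ∀ h : H,
    braceLHS k H fst.Δ snd.Δ h = braceRHS k H fst.Δ snd.Δ fst.S h

/-- The coaction `ρ(h) = S(h_1) h_{21'} ⊗ h_{22'}` of Lemma 2.5. -/
def ρmap (H : Type*) [Ring H] [Algebra k H] (Δ Δ' : H →ₗ[k] H ⊗[k] H)
    (S : H →ₗ[k] H) : H →ₗ[k] H ⊗[k] H :=
  (LinearMap.mul' k (H ⊗[k] H)).comp
    ((TensorProduct.map ((ι₁ k H H).comp S) Δ').comp Δ)

/-- The coaction `φ(a) = (T(a_{1'}))_{(-1)} a_{2'} ⊗ (T(a_{1'}))_{(0)} a_{3'}`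
of Lemma 2.8(2), where `x_{(-1)} ⊗ x_{(0)} = ρ(x)`. -/
def φmap (H : Type*) [Ring H] [Algebra k H] (Δ Δ' : H →ₗ[k] H ⊗[k] H)
    (S T : H →ₗ[k] H) : H →ₗ[k] H ⊗[k] H :=
  (LinearMap.mul' k (H ⊗[k] H)).comp
    ((TensorProduct.map ((ρmap k H Δ Δ' S).comp T)
        (LinearMap.id : H ⊗[k] H →ₗ[k] H ⊗[k] H)).comp
      ((TensorProduct.map (LinearMap.id : H →ₗ[k] H) Δ').comp Δ'))

/-- `ρ : A →ₗ H ⊗ A` is a coassociative counital left coaction of the coalgebra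
`(H, ΔH, εH)`. -/
def LeftCoaction (A H : Type*) [Ring A] [Algebra k A] [Ring H] [Algebra k H]
    (ΔH : H →ₗ[k] H ⊗[k] H) (εH : H →ₗ[k] k) (ρ : A →ₗ[k] H ⊗[k] A) : Prop :=
  (∀ a : A,
    TensorProduct.map (LinearMap.id : H →ₗ[k] H) ρ (ρ a)
      = TensorProduct.assoc k H H A
          (TensorProduct.map ΔH (LinearMap.id : A →ₗ[k] A) (ρ a))) ∧
  (∀ a : A,
    TensorProduct.lid k A (TensorProduct.map εH (LinearMap.id : A →ₗ[k] A) (ρ a)) = a)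

/-- `φ : H →ₗ H ⊗ A` is a coassociative counital right coaction of the coalgebra
`(A, ΔA, εA)`. -/
def RightCoaction (A H : Type*) [Ring A] [Algebra k A] [Ring H] [Algebra k H]
    (ΔA : A →ₗ[k] A ⊗[k] A) (εA : A →ₗ[k] k) (φ : H →ₗ[k] H ⊗[k] A) : Prop :=
  (∀ h : H,
    TensorProduct.map (LinearMap.id : H →ₗ[k] H) ΔA (φ h)
      = TensorProduct.assoc k H A A
          (TensorProduct.map φ (LinearMap.id : A →ₗ[k] A) (φ h))) ∧
  (∀ h : H,
    TensorProduct.rid k H (TensorProduct.map (LinearMap.id : H →ₗ[k] H) εA (φ h)) = h)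

/-- a linear map which is moreover multiplicative and unital. -/
def IsAlgebraMorphism (M N : Type*) [Ring M] [Algebra k M] [Ring N] [Algebra k N]
    (f : M →ₗ[k] N) : Prop :=
  (∀ a b : M, f (a * b) = f a * f b) ∧ f 1 = 1

/-- `a ↦ a_{1(-1)} a_{2(-1)} ⊗ a_{1(0)} ⊗ a_{2(0)}`, the right hand side of the
comodule coalgebra condition. -/
def comodCoalgRHS (A H : Type*) [Ring A] [Algebra k A] [Ring H] [Algebra k H]
    (ΔA : A →ₗ[k] A ⊗[k] A) (ρ : A →ₗ[k] H ⊗[k] A) :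
    A →ₗ[k] H ⊗[k] (A ⊗[k] A) :=
  (LinearMap.mul' k (H ⊗[k] (A ⊗[k] A))).comp
    ((TensorProduct.map
        ((TensorProduct.map (LinearMap.id : H →ₗ[k] H) (ι₁ k A A)).comp ρ)
        ((TensorProduct.map (LinearMap.id : H →ₗ[k] H) (ι₂ k A A)).comp ρ)).comp ΔA)

/-- The two conditions making a left `H`-comodule `(A, ρ)` a comodule coalgebra:
`a_{(-1)} ⊗ Δ(a_{(0)}) = a_{1(-1)} a_{2(-1)} ⊗ a_{1(0)} ⊗ a_{2(0)}` and
`a_{(-1)} ε(a_{(0)}) = ε(a) 1`. -/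
def IsComodCoalg (A H : Type*) [Ring A] [Algebra k A] [Ring H] [Algebra k H]
    (ΔA : A →ₗ[k] A ⊗[k] A) (εA : A →ₗ[k] k) (ρ : A →ₗ[k] H ⊗[k] A) : Prop :=
  (∀ a : A,
    TensorProduct.map (LinearMap.id : H →ₗ[k] H) ΔA (ρ a)
      = comodCoalgRHS k A H ΔA ρ a) ∧
  (∀ a : A,
    TensorProduct.rid k H (TensorProduct.map (LinearMap.id : H →ₗ[k] H) εA (ρ a))
      = algebraMap k H (εA a))

/-- `a ↦ a_{1(-1)} a_{2(-1)[0]} ⊗ a_{1(0)} a_{2(-1)[1]} ⊗ a_{2(0)}`, the right hand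
side of (HM2). -/
def HM2RHS (A H : Type*) [Ring A] [Algebra k A] [Ring H] [Algebra k H]
    (ΔA : A →ₗ[k] A ⊗[k] A) (ρ : A →ₗ[k] H ⊗[k] A) (φ : H →ₗ[k] H ⊗[k] A) :
    A →ₗ[k] H ⊗[k] (A ⊗[k] A) :=
  (LinearMap.mul' k (H ⊗[k] (A ⊗[k] A))).comp
    ((TensorProduct.map
        ((TensorProduct.map (LinearMap.id : H →ₗ[k] H) (ι₁ k A A)).comp ρ)
        ((TensorProduct.assoc k H A A).toLinearMap.comp
          ((TensorProduct.map φ (LinearMap.id : A →ₗ[k] A)).comp ρ))).comp ΔA)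

/-- `h ↦ h_{1[0]} ⊗ h_{1[1](-1)} h_{2[0]} ⊗ h_{1[1](0)} h_{2[1]}`, the right hand
side of (HM3). -/
def HM3RHS (A H : Type*) [Ring A] [Algebra k A] [Ring H] [Algebra k H]
    (ΔH : H →ₗ[k] H ⊗[k] H) (ρ : A →ₗ[k] H ⊗[k] A) (φ : H →ₗ[k] H ⊗[k] A) :
    H →ₗ[k] H ⊗[k] (H ⊗[k] A) :=
  (LinearMap.mul' k (H ⊗[k] (H ⊗[k] A))).comp
    ((TensorProduct.map
        ((TensorProduct.map (LinearMap.id : H →ₗ[k] H) ρ).comp φ)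
        ((ι₂ k H (H ⊗[k] A)).comp φ)).comp ΔH)

/-- A Hopf matched pair `(A, H)` (Definition 3.1): `ρ` makes `A` a left
`H`-comodule algebra, `φ` makes `H` a right `A`-comodule algebra, and the
compatibility conditions (HM1)–(HM4) hold. -/
def IsHopfMatchedPair (A H : Type*) [Ring A] [Algebra k A] [Ring H] [Algebra k H]
    (ΔA : A →ₗ[k] A ⊗[k] A) (εA : A →ₗ[k] k)
    (ΔH : H →ₗ[k] H ⊗[k] H) (εH : H →ₗ[k] k)
    (ρ : A →ₗ[k] H ⊗[k] A) (φ : H →ₗ[k] H ⊗[k] A) : Prop :=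
  LeftCoaction k A H ΔH εH ρ ∧
  IsAlgebraMorphism k A (H ⊗[k] A) ρ ∧
  RightCoaction k A H ΔA εA φ ∧
  IsAlgebraMorphism k H (H ⊗[k] A) φ ∧
  -- (HM1)
  (∀ a : A,
    TensorProduct.rid k H (TensorProduct.map (LinearMap.id : H →ₗ[k] H) εA (ρ a))
      = algebraMap k H (εA a)) ∧
  (∀ h : H,
    TensorProduct.lid k A (TensorProduct.map εH (LinearMap.id : A →ₗ[k] A) (φ h))
      = algebraMap k A (εH h)) ∧
  -- (HM2)
  (∀ a : A,
    TensorProduct.map (LinearMap.id : H →ₗ[k] H) ΔA (ρ a) = HM2RHS k A H ΔA ρ φ a) ∧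
  -- (HM3)
  (∀ h : H,
    TensorProduct.assoc k H H A
        (TensorProduct.map ΔH (LinearMap.id : A →ₗ[k] A) (φ h))
      = HM3RHS k A H ΔH ρ φ h) ∧
  -- (HM4)
  (∀ (a : A) (h : H), φ h * ρ a = ρ a * φ h)

/-- Equation (3.2): `Δ(a) = a_{1'} T(a_{2'(-1)}) ⊗ a_{2'(0)}`. -/
def Δfromρ (A : Type*) [Ring A] [Algebra k A] (Δ' : A →ₗ[k] A ⊗[k] A)
    (T : A →ₗ[k] A) (ρ : A →ₗ[k] A ⊗[k] A) : A →ₗ[k] A ⊗[k] A :=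
  (LinearMap.mul' k (A ⊗[k] A)).comp
    ((TensorProduct.map (ι₁ k A A)
        ((TensorProduct.map T (LinearMap.id : A →ₗ[k] A)).comp ρ)).comp Δ')

/-- Equation (3.3): `S(a) = a_{(-1)} T(a_{(0)})`. -/
def Sfromρ (A : Type*) [Ring A] [Algebra k A] (T : A →ₗ[k] A)
    (ρ : A →ₗ[k] A ⊗[k] A) : A →ₗ[k] A :=
  (LinearMap.mul' k A).comp
    ((TensorProduct.map (LinearMap.id : A →ₗ[k] A) T).comp ρ)

/-- The comultiplication `Δ_R(h) = R · Δ(h) · R⁻¹` obtained by conjugating `Δ` with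
an invertible element `R ∈ H ⊗ H`. -/
def conjComul (H : Type*) [Ring H] [Algebra k H] (R Rinv : H ⊗[k] H)
    (Δ : H →ₗ[k] H ⊗[k] H) : H →ₗ[k] H ⊗[k] H :=
  (LinearMap.mulLeft k R).comp ((LinearMap.mulRight k Rinv).comp Δ)

/-- The braiding candidate `c(x ⊗ y) = x_{(-1)} y_{[0]} ⊗ x_{(0)} y_{[1]}` of
Proposition 2.9, i.e. `c = mult ∘ (ρ ⊗ φ)`. -/
def cmap (A : Type*) [Ring A] [Algebra k A] (Δ Δ' : A →ₗ[k] A ⊗[k] A)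
    (S T : A →ₗ[k] A) : A ⊗[k] A →ₗ[k] A ⊗[k] A :=
  (LinearMap.mul' k (A ⊗[k] A)).comp
    (TensorProduct.map (ρmap k A Δ Δ' S) (φmap k A Δ Δ' S T))

/-- `γ(x ⊗ y) = x y_{(-1)} ⊗ y_{(0)}` for a coaction `ρ(y) = y_{(-1)} ⊗ y_{(0)}`. -/
def γmap (A : Type*) [Ring A] [Algebra k A] (ρ : A →ₗ[k] A ⊗[k] A) :
    A ⊗[k] A →ₗ[k] A ⊗[k] A :=
  (LinearMap.mul' k (A ⊗[k] A)).comp (TensorProduct.map (ι₁ k A A) ρ)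

/-- `σ(x ⊗ y) = y_2 ⊗ x S(y_1) y_3`. -/
def σmap (A : Type*) [Ring A] [Algebra k A] (Δ : A →ₗ[k] A ⊗[k] A)
    (S : A →ₗ[k] A) : A ⊗[k] A →ₗ[k] A ⊗[k] A :=
  (mul₄ k (A ⊗[k] A)).comp
    ((TensorProduct.map (ι₂ k A A)
        (TensorProduct.map ((ι₂ k A A).comp S)
          (TensorProduct.map (ι₁ k A A) (ι₂ k A A)))).comp
      (TensorProduct.map (LinearMap.id : A →ₗ[k] A)
        ((TensorProduct.map (LinearMap.id : A →ₗ[k] A) Δ).comp Δ)))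

/-- The usual tensor product comultiplication `Δ̂` on `A ⊗ H`:
`a ⊗ h ↦ (a_1 ⊗ h_1) ⊗ (a_2 ⊗ h_2)`. -/
def hatΔ (A H : Type*) [Ring A] [Algebra k A] [Ring H] [Algebra k H]
    (ΔA : A →ₗ[k] A ⊗[k] A) (ΔH : H →ₗ[k] H ⊗[k] H) :
    A ⊗[k] H →ₗ[k] (A ⊗[k] H) ⊗[k] (A ⊗[k] H) :=
  (TensorProduct.tensorTensorTensorComm k A A H H).toLinearMap.comp
    (TensorProduct.map ΔA ΔH)

/-- The bicrossed coproduct comultiplication on `A ⊗ H`: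
`Δ̃(a ⊗ h) = a_1 ⊗ a_{2(-1)} h_{1[0]} ⊗ a_{2(0)} h_{1[1]} ⊗ h_2`. -/
def bicrossΔ (A H : Type*) [Ring A] [Algebra k A] [Ring H] [Algebra k H]
    (ΔA : A →ₗ[k] A ⊗[k] A) (ΔH : H →ₗ[k] H ⊗[k] H)
    (ρ : A →ₗ[k] H ⊗[k] A) (φ : H →ₗ[k] H ⊗[k] A) :
    A ⊗[k] H →ₗ[k] (A ⊗[k] H) ⊗[k] (A ⊗[k] H) :=
  (LinearMap.mul' k ((A ⊗[k] H) ⊗[k] (A ⊗[k] H))).comp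
    (TensorProduct.map
      -- a ↦ (a_1 ⊗ a_{2(-1)}) ⊗ (a_{2(0)} ⊗ 1)
      ((TensorProduct.map (LinearMap.id : A ⊗[k] H →ₗ[k] A ⊗[k] H) (ι₁ k A H)).comp
        ((TensorProduct.assoc k A H A).symm.toLinearMap.comp
          ((TensorProduct.map (LinearMap.id : A →ₗ[k] A) ρ).comp ΔA)))
      -- h ↦ (1 ⊗ h_{1[0]}) ⊗ (h_{1[1]} ⊗ h_2)
      ((TensorProduct.map (ι₂ k A H) (LinearMap.id : A ⊗[k] H →ₗ[k] A ⊗[k] H)).comp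
        ((TensorProduct.assoc k H A H).toLinearMap.comp
          ((TensorProduct.map φ (LinearMap.id : H →ₗ[k] H)).comp ΔH))))

/-- The antipode of the bicrossed coproduct:
`S̃(a ⊗ h) = S_A(h_{[1]}) S_A(a_{(0)}) ⊗ S_H(h_{[0]}) S_H(a_{(-1)})`. -/
def bicrossS (A H : Type*) [Ring A] [Algebra k A] [Ring H] [Algebra k H]
    (SA : A →ₗ[k] A) (SH : H →ₗ[k] H)
    (ρ : A →ₗ[k] H ⊗[k] A) (φ : H →ₗ[k] H ⊗[k] A) :
    A ⊗[k] H →ₗ[k] A ⊗[k] H :=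
  (LinearMap.mul' k (A ⊗[k] H)).comp
    ((TensorProduct.map
        ((TensorProduct.map SA SH).comp ((TensorProduct.comm k H A).toLinearMap.comp φ))
        ((TensorProduct.map SA SH).comp ((TensorProduct.comm k H A).toLinearMap.comp ρ))).comp
      (TensorProduct.comm k A H).toLinearMap)

/-- The left hand side `h_{[0]} ⊗ h_{[1]1} ⊗ h_{[1]2}` of equation (4.1), where the
`A`-leg is comultiplied with `Δ'`. -/
def eq41LHS (A H : Type*) [Ring A] [Algebra k A] [Ring H] [Algebra k H]
    (Δ'A : A →ₗ[k] A ⊗[k] A) (φ : H →ₗ[k] H ⊗[k] A) :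
    H →ₗ[k] H ⊗[k] (A ⊗[k] A) :=
  (TensorProduct.map (LinearMap.id : H →ₗ[k] H) Δ'A).comp φ

/-- The right hand side `h_{1[0]} S(h_2) h_{3[0]} ⊗ h_{1[1]} ⊗ h_{3[1]}` of
equation (4.1). -/
def eq41RHS (A H : Type*) [Ring A] [Algebra k A] [Ring H] [Algebra k H]
    (ΔH : H →ₗ[k] H ⊗[k] H) (SH : H →ₗ[k] H) (φ : H →ₗ[k] H ⊗[k] A) :
    H →ₗ[k] H ⊗[k] (A ⊗[k] A) :=
  (mul₃ k (H ⊗[k] (A ⊗[k] A))).comp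
    ((TensorProduct.map
        ((TensorProduct.map (LinearMap.id : H →ₗ[k] H) (ι₁ k A A)).comp φ)
        (TensorProduct.map ((ι₁ k H (A ⊗[k] A)).comp SH)
          ((TensorProduct.map (LinearMap.id : H →ₗ[k] H) (ι₂ k A A)).comp φ))).comp
      ((TensorProduct.map (LinearMap.id : H →ₗ[k] H) ΔH).comp ΔH))

/-- `x ↦ x_{11'} S(x_2) ⊗ x_{12'} ⊗ 1 ∈ H ⊗ (H ⊗ A)`, an auxiliary map for
equations (4.2) and (4.3). -/
def LHmap (A H : Type*) [Ring A] [Algebra k A] [Ring H] [Algebra k H]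
    (ΔH Δ'H : H →ₗ[k] H ⊗[k] H) (SH : H →ₗ[k] H) :
    H →ₗ[k] H ⊗[k] (H ⊗[k] A) :=
  (LinearMap.mul' k (H ⊗[k] (H ⊗[k] A))).comp
    ((TensorProduct.map
        ((TensorProduct.map (LinearMap.id : H →ₗ[k] H) (ι₁ k H A)).comp Δ'H)
        ((ι₁ k H (H ⊗[k] A)).comp SH)).comp ΔH)

/-- The right hand side
`a_{(-1)11'} S(a_{(-1)2}) a_{(0)(-1)'} ⊗ a_{(-1)12'} ⊗ a_{(0)(0)'}` of
equation (4.2). -/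
def eq42RHS (A H : Type*) [Ring A] [Algebra k A] [Ring H] [Algebra k H]
    (ΔH Δ'H : H →ₗ[k] H ⊗[k] H) (SH : H →ₗ[k] H)
    (ρ ρ' : A →ₗ[k] H ⊗[k] A) :
    A →ₗ[k] H ⊗[k] (H ⊗[k] A) :=
  (LinearMap.mul' k (H ⊗[k] (H ⊗[k] A))).comp
    ((TensorProduct.map (LHmap k A H ΔH Δ'H SH)
        ((TensorProduct.map (LinearMap.id : H →ₗ[k] H) (ι₂ k H A)).comp ρ')).comp ρ)

/-- The right hand side
`h_{1[0]11'} S(h_{1[0]2}) h_{1[1](-1)'} h_2 ⊗ h_{1[0]12'} ⊗ h_{1[1](0)'}` of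
equation (4.3). -/
def eq43RHS (A H : Type*) [Ring A] [Algebra k A] [Ring H] [Algebra k H]
    (ΔH Δ'H : H →ₗ[k] H ⊗[k] H) (SH : H →ₗ[k] H)
    (ρ' : A →ₗ[k] H ⊗[k] A) (φ : H →ₗ[k] H ⊗[k] A) :
    H →ₗ[k] H ⊗[k] (H ⊗[k] A) :=
  (LinearMap.mul' k (H ⊗[k] (H ⊗[k] A))).comp
    ((TensorProduct.map
        ((LinearMap.mul' k (H ⊗[k] (H ⊗[k] A))).comp
          ((TensorProduct.map (LHmap k A H ΔH Δ'H SH)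
              ((TensorProduct.map (LinearMap.id : H →ₗ[k] H) (ι₂ k H A)).comp ρ')).comp φ))
        (ι₁ k H (H ⊗[k] A))).comp ΔH)

/-- Auxiliary map `a ⊗ (b ⊗ c) ↦ (a S(b) ⊗ 1) * Δ'(c)`. -/
def L2aux (H : Type*) [Ring H] [Algebra k H] (Δ' : H →ₗ[k] H ⊗[k] H)
    (S : H →ₗ[k] H) : H ⊗[k] (H ⊗[k] H) →ₗ[k] H ⊗[k] H :=
  (LinearMap.mul' k (H ⊗[k] H)).comp
    ((TensorProduct.map
        ((ι₁ k H H).comp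
          ((LinearMap.mul' k H).comp
            (TensorProduct.map (LinearMap.id : H →ₗ[k] H) S))) Δ').comp
      (TensorProduct.assoc k H H H).symm.toLinearMap)

set_option synthInstance.maxHeartbeats 1000000
set_option maxHeartbeats 1000000

lemma key1 {k : Type*} [Field k] {H : Type*} [Ring H] [Algebra k H]
    (Δ Δ' : H →ₗ[k] H ⊗[k] H) (S : H →ₗ[k] H) (x : H ⊗[k] H) :
    LinearMap.mul' k (H ⊗[k] H)
        (TensorProduct.map (ι₁ k H H) (ρmap k H Δ Δ' S) x)
      = L2aux k H Δ' S
          (TensorProduct.map (LinearMap.id : H →ₗ[k] H) Δ x) := by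
  induction x with
  | zero => simp
  | add u v hu hv => simp [map_add, hu, hv]
  | tmul a b =>
      simp only [TensorProduct.map_tmul, LinearMap.id_apply, ρmap, L2aux,
        LinearMap.comp_apply, LinearEquiv.coe_coe]
      generalize Δ b = y
      induction y with
      | zero => simp
      | add u v hu hv =>
          simp only [TensorProduct.tmul_add, map_add, mul_add, hu, hv]
      | tmul b1 b2 =>
          simp [ι₁, LinearMap.mul'_apply,
            Algebra.TensorProduct.tmul_mul_tmul, ← mul_assoc]

lemma key3 {k : Type*} [Field k] {H : Type*} [Ring H] [Algebra k H]
    (HS : HopfStruct k H) (Δ' : H →ₗ[k] H ⊗[k] H) (x : H ⊗[k] H) :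
    L2aux k H Δ' HS.S
        (TensorProduct.assoc k H H H
          (TensorProduct.map HS.Δ (LinearMap.id : H →ₗ[k] H) x))
      = Δ' (TensorProduct.lid k H
          (TensorProduct.map HS.ε (LinearMap.id : H →ₗ[k] H) x)) := by
  induction x with
  | zero => simp
  | add u v hu hv => simp [map_add, hu, hv]
  | tmul a b =>
      simp only [TensorProduct.map_tmul, LinearMap.id_apply]
      have : (TensorProduct.assoc k H H H).symm
          (TensorProduct.assoc k H H H (HS.Δ a ⊗ₜ[k] b)) = HS.Δ a ⊗ₜ[k] b :=
        (TensorProduct.assoc k H H H).symm_apply_apply _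
      simp only [L2aux, LinearMap.comp_apply, LinearEquiv.coe_coe, this,
        TensorProduct.map_tmul, HS.antipode_right a, ι₁,
        LinearMap.flip_apply, TensorProduct.mk_apply,
        TensorProduct.lid_tmul, map_smul]
      rw [Algebra.algebraMap_eq_smul_one]
      rw [LinearMap.mul'_apply, ← TensorProduct.smul_tmul', smul_mul_assoc,
        ← Algebra.TensorProduct.one_def, one_mul]

/-- Remark 2.6, equation (2.4).  For a Hopf brace `(H, Δ, Δ')`
with antipode `S` for `Δ` and `ρ(h) = S(h_1) h_{21'} ⊗ h_{22'}`, one has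
`h_{1'} ⊗ h_{2'} = h_1 h_{2(-1)} ⊗ h_{2(0)}`, i.e.
`Δ' = (m ⊗ id) ∘ (id ⊗ ρ) ∘ Δ`. -/
theorem remark_2_6_eq_2_4 {k : Type*} [Field k] {H : Type*} [Ring H] [Algebra k H]
    (HB : HopfBrace k H) :
    ∀ h : H,
      HB.snd.Δ h
        = LinearMap.mul' k (H ⊗[k] H)
            (TensorProduct.map (ι₁ k H H)
              (ρmap k H HB.fst.Δ HB.snd.Δ HB.fst.S) (HB.fst.Δ h)) := by
  intro h
  rw [key1, HB.fst.coassoc h, key3, HB.fst.counit_left h]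

end HopfPaper
end
end

section
/- Let (A, Δ, Δ') be a commutative Hopf brace (i.e. the underlying algebra A is commutative) with antipode S for Δ. Then the map ρ: A → A ⊗ A, ρ(a) = S(a_1) a_{21'} ⊗ a_{22'}, makes A a left comodule algebra over (A, Δ'): ρ is a coassociative counital left (A, Δ')-coaction and ρ is an algebra homomorphism, in particular ρ(ab) = ρ(a)ρ(b) and ρ(1) = 1 ⊗ 1. -/
open TensorProduct

noncomputable section

namespace HopfPaper

variable (k : Type*) [Field k]

/-!
For a commutative Hopf algebra `(A, Δ, S)`, algebra maps from `A` into a commutative algebra form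
a monoid under `Δ`-convolution, in which `f ∘ S` is a two-sided inverse of `f`, and postcomposition
with an algebra map is a monoid homomorphism. In this monoid `ρ = (ι₁ ∘ S) * Δ'` is a product of
algebra maps, hence an algebra map, and the brace condition (2.1) reads
`(id ⊗ Δ) ∘ Δ' = w * (ι₁ ∘ S) * u` with `w = (id ⊗ ι₁) ∘ Δ'` and `u = (id ⊗ ι₂) ∘ Δ'`.

Applying `ε' ⊗ ε ⊗ ε` to (2.1) gives `ε = ε * (ε' ∘ S) * ε`, so `ε' ∘ S`, and with it `ε'`, is the
unit `ε`; counitality of `ρ` follows. For coassociativity, `ν (x ⊗ y) = (x ⊗ 1) ρ(y)` is an algebra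
map with `ν ∘ Δ = ι₁ * ρ = Δ'`, so applying `id ⊗ ν` to (2.1) gives
`(id ⊗ Δ') ∘ Δ' = w * (id ⊗ ρ) ∘ ρ`, while coassociativity of `Δ'` gives
`(id ⊗ Δ') ∘ Δ' = w * (Δ' ⊗ id) ∘ ρ`; cancelling the invertible `w` finishes the proof.
-/

open WithConv Bialgebra HopfAlgebra
open Algebra.TensorProduct (includeLeft includeRight lmul')

namespace HopfStruct

variable {k} {H : Type*} [Ring H] [Algebra k H] (HS : HopfStruct k H)

abbrev toCoalgebra : Coalgebra k H where
  comul := HS.Δ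
  counit := HS.ε
  coassoc := LinearMap.ext fun h => (HS.coassoc h).symm
  rTensor_counit_comp_comul := LinearMap.ext fun h =>
    (TensorProduct.lid k H).eq_symm_apply.mpr (HS.counit_left h)
  lTensor_counit_comp_comul := LinearMap.ext fun h =>
    (TensorProduct.rid k H).eq_symm_apply.mpr (HS.counit_right h)

abbrev toHopfAlgebra : HopfAlgebra k H :=
  letI := HS.toCoalgebra
  letI := Bialgebra.mk' k H HS.counit_one (HS.counit_mul _ _) HS.comul_one (HS.comul_mul _ _)
  { antipode := HS.S
    mul_antipode_rTensor_comul := LinearMap.ext HS.antipode_left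
    mul_antipode_lTensor_comul := LinearMap.ext HS.antipode_right }

def comulAlgHom : H →ₐ[k] H ⊗[k] H := .ofLinearMap HS.Δ HS.comul_one HS.comul_mul

def counitAlgHom : H →ₐ[k] k := .ofLinearMap HS.ε HS.counit_one HS.counit_mul

lemma lid_comp_map_counitAlgHom_comp_comulAlgHom :
    (Algebra.TensorProduct.lid k H).toAlgHom.comp
      ((Algebra.TensorProduct.map HS.counitAlgHom (.id k H)).comp HS.comulAlgHom) = .id k H :=
  AlgHom.ext HS.counit_left

lemma assoc_comp_map_comulAlgHom_comp_comulAlgHom :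
    (Algebra.TensorProduct.assoc k k k H H H).toAlgHom.comp
      ((Algebra.TensorProduct.map HS.comulAlgHom (.id k H)).comp HS.comulAlgHom) =
      (Algebra.TensorProduct.map (.id k H) HS.comulAlgHom).comp HS.comulAlgHom :=
  AlgHom.ext fun h => (HS.coassoc h).symm

end HopfStruct

section ConvolutionMonoid

variable {R C B B' : Type*} [CommSemiring R] [Semiring C] [Bialgebra R C]
  [CommSemiring B] [Algebra R B] [CommSemiring B'] [Algebra R B']

def _root_.AlgHom.convCompLeft (h : B →ₐ[R] B') :
    WithConv (C →ₐ[R] B) →* WithConv (C →ₐ[R] B') where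
  toFun f := toConv (h.comp f.ofConv)
  map_one' := WithConv.ext <| AlgHom.ext fun _ => h.commutes _
  map_mul' f g := by rw [AlgHom.comp_convMul_distrib]

@[simp]
lemma _root_.AlgHom.convCompLeft_toConv (h : B →ₐ[R] B') (f : C →ₐ[R] B) :
    h.convCompLeft (toConv f) = toConv (h.comp f) := rfl

lemma counitAlgHom_comp_comulAlgHom :
    (counitAlgHom R (C ⊗[R] C)).comp (comulAlgHom R C) = counitAlgHom R C := by
  have hcounit : (Coalgebra.counit : C ⊗[R] C →ₗ[R] R) =
      Coalgebra.counit ∘ₗ (TensorProduct.lid R C).toLinearMap ∘ₗ Coalgebra.counit.rTensor C := by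
    ext x y; simp [mul_comm]
  ext a
  simp [hcounit]

lemma toConv_counitAlgHom : toConv (counitAlgHom R C) = 1 := rfl

end ConvolutionMonoid

section ConvolutionInverse

variable {R C B : Type*} [CommSemiring R] [CommSemiring C] [HopfAlgebra R C]
  [CommSemiring B] [Algebra R B]

lemma toConv_comp_antipode_mul (f : C →ₐ[R] B) :
    toConv (f.comp (antipodeAlgHom R C)) * toConv f = 1 := by
  simpa using congrArg f.convCompLeft AlgHom.antipode_id_cancel

lemma toConv_mul_comp_antipode (f : C →ₐ[R] B) :
    toConv f * toConv (f.comp (antipodeAlgHom R C)) = 1 := by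
  have hid : toConv (AlgHom.id R C) * toConv (antipodeAlgHom R C) = 1 := by
    apply WithConv.ofConv_injective
    apply AlgHom.toLinearMap_injective
    apply WithConv.toConv_injective
    rw [AlgHom.toLinearMap_convMul, AlgHom.toLinearMap_convOne]
    simp [LinearMap.id_mul_antipode]
  simpa using congrArg f.convCompLeft hid

lemma toConv_mul_left_cancel (f : C →ₐ[R] B) {g g' : WithConv (C →ₐ[R] B)}
    (h : toConv f * g = toConv f * g') : g = g' := by
  rw [← one_mul g, ← one_mul g', ← toConv_comp_antipode_mul f, mul_assoc, mul_assoc, h]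

end ConvolutionInverse

section BraceCoaction

variable {R A : Type*} [CommSemiring R] [CommSemiring A] [HopfAlgebra R A]
  {Δ' : A →ₐ[R] A ⊗[R] A}

variable (Δ') in
/-- Condition (2.1): its right-hand side `a_{11'}S(a_2)a_{31'} ⊗ a_{12'} ⊗ a_{32'}` is a threefold
`Δ`-convolution product. -/
def IsBraceCompatible : Prop :=
  toConv ((Algebra.TensorProduct.map (.id R A) (comulAlgHom R A)).comp Δ') =
    toConv ((Algebra.TensorProduct.map (.id R A) includeLeft).comp Δ') *
      toConv (includeLeft.comp (antipodeAlgHom R A)) *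
      toConv ((Algebra.TensorProduct.map (.id R A) includeRight).comp Δ')

variable (Δ') in
def braceCoaction : A →ₐ[R] A ⊗[R] A :=
  (toConv (includeLeft.comp (antipodeAlgHom R A)) * toConv Δ').ofConv

variable (Δ') in
lemma includeLeft_mul_braceCoaction :
    toConv includeLeft * toConv (braceCoaction Δ') = toConv Δ' := by
  rw [braceCoaction, toConv_ofConv, ← mul_assoc, toConv_mul_comp_antipode, one_mul]

variable (Δ') in
def braceMulCoaction : A ⊗[R] A →ₐ[R] A ⊗[R] A :=
  (lmul' R).comp (Algebra.TensorProduct.map (includeLeft : A →ₐ[R] A ⊗[R] A) (braceCoaction Δ'))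

lemma braceMulCoaction_comp_comulAlgHom :
    (braceMulCoaction Δ').comp (comulAlgHom R A) = Δ' :=
  congrArg ofConv (includeLeft_mul_braceCoaction Δ')

lemma braceMulCoaction_comp_includeLeft :
    (braceMulCoaction Δ').comp includeLeft = includeLeft := by
  ext; simp [braceMulCoaction]

lemma braceMulCoaction_comp_includeRight :
    (braceMulCoaction Δ').comp includeRight = braceCoaction Δ' := by
  ext; simp [braceMulCoaction, ← Algebra.TensorProduct.one_def]

lemma IsBraceCompatible.eq_counitAlgHom {ε' : A →ₐ[R] R} (h : IsBraceCompatible Δ')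
    (hε' : (Algebra.TensorProduct.lid R A).toAlgHom.comp
      ((Algebra.TensorProduct.map ε' (.id R A)).comp Δ') = .id R A) :
    ε' = counitAlgHom R A := by
  let E : A ⊗[R] (A ⊗[R] A) →ₐ[R] R :=
    (lmul' R).comp (Algebra.TensorProduct.map ε' (counitAlgHom R (A ⊗[R] A)))
  have hE : ∀ g : A →ₐ[R] A ⊗[R] A, (counitAlgHom R (A ⊗[R] A)).comp g = counitAlgHom R A →
      E.comp ((Algebra.TensorProduct.map (.id R A) g).comp Δ') = counitAlgHom R A := by
    intro g hg
    have hEg : E.comp (Algebra.TensorProduct.map (.id R A) g) = (counitAlgHom R A).comp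
        ((Algebra.TensorProduct.lid R A).toAlgHom.comp
          (Algebra.TensorProduct.map ε' (.id R A))) := by
      refine Algebra.TensorProduct.ext' fun x y => ?_
      simp [E, ← AlgHom.comp_apply _ g, hg]
    rw [← AlgHom.comp_assoc, hEg, AlgHom.comp_assoc, AlgHom.comp_assoc, hε', AlgHom.comp_id]
  have h' := congrArg E.convCompLeft h
  simp only [map_mul, AlgHom.convCompLeft_toConv] at h'
  rw [hE _ counitAlgHom_comp_comulAlgHom, hE _ (by ext; simp), hE _ (by ext; simp),
    toConv_counitAlgHom, one_mul, mul_one] at h'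
  have hS : toConv (ε'.comp (antipodeAlgHom R A)) = 1 := by
    rw [h', ← AlgHom.comp_assoc]
    congr 2
    ext; simp [E]
  rw [← WithConv.toConv_injective.eq_iff, toConv_counitAlgHom,
    ← toConv_mul_comp_antipode ε', hS, mul_one]

lemma IsBraceCompatible.lid_comp_map_comp_braceCoaction {ε' : A →ₐ[R] R}
    (h : IsBraceCompatible Δ')
    (hε' : (Algebra.TensorProduct.lid R A).toAlgHom.comp
      ((Algebra.TensorProduct.map ε' (.id R A)).comp Δ') = .id R A) :
    (Algebra.TensorProduct.lid R A).toAlgHom.comp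
      ((Algebra.TensorProduct.map ε' (.id R A)).comp (braceCoaction Δ')) = .id R A := by
  let P := (Algebra.TensorProduct.lid R A).toAlgHom.comp (Algebra.TensorProduct.map ε' (.id R A))
  have hPι : P.comp includeLeft = (Algebra.ofId R A).comp ε' := by
    ext; simp [P, Algebra.smul_def]
  apply WithConv.toConv_injective
  calc toConv (P.comp (braceCoaction Δ'))
      = P.convCompLeft (toConv (includeLeft.comp (antipodeAlgHom R A)) * toConv Δ') := rfl
    _ = toConv ((Algebra.ofId R A).comp ((counitAlgHom R A).comp (antipodeAlgHom R A))) *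
          toConv (P.comp Δ') := by
      rw [map_mul, AlgHom.convCompLeft_toConv, AlgHom.convCompLeft_toConv, ← AlgHom.comp_assoc,
        hPι, h.eq_counitAlgHom hε', AlgHom.comp_assoc]
    _ = toConv (.id R A) := by
      rw [AlgHom.counitAlgHom_comp_antipodeAlgHom]
      exact (one_mul _).trans (congrArg toConv hε')

lemma IsBraceCompatible.toConv_mul_map_braceCoaction_comp (h : IsBraceCompatible Δ') :
    toConv ((Algebra.TensorProduct.map (.id R A) includeLeft).comp Δ') *
      toConv ((Algebra.TensorProduct.map (.id R A) (braceCoaction Δ')).comp (braceCoaction Δ')) =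
      toConv ((Algebra.TensorProduct.map (.id R A) Δ').comp Δ') := by
  set ν := Algebra.TensorProduct.map (.id R A) (braceMulCoaction Δ')
  set Φ := Algebra.TensorProduct.map (.id R A) (braceCoaction Δ')
  set w : A →ₐ[R] A ⊗[R] (A ⊗[R] A) := (Algebra.TensorProduct.map (.id R A) includeLeft).comp Δ'
  set ι₁S : A →ₐ[R] A ⊗[R] (A ⊗[R] A) := includeLeft.comp (antipodeAlgHom R A)
  have hw : ν.comp w = w := by
    rw [← AlgHom.comp_assoc, ← Algebra.TensorProduct.map_id_comp,
      braceMulCoaction_comp_includeLeft]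
  have hν : ν.comp ι₁S = ι₁S := by
    rw [← AlgHom.comp_assoc, Algebra.TensorProduct.map_comp_includeLeft]; rfl
  have hΦ : Φ.comp ((includeLeft : A →ₐ[R] A ⊗[R] A).comp (antipodeAlgHom R A)) = ι₁S := by
    rw [← AlgHom.comp_assoc, Algebra.TensorProduct.map_comp_includeLeft]; rfl
  have hu : ν.comp ((Algebra.TensorProduct.map (.id R A) includeRight).comp Δ') = Φ.comp Δ' := by
    rw [← AlgHom.comp_assoc, ← Algebra.TensorProduct.map_id_comp,
      braceMulCoaction_comp_includeRight]
  calc toConv w * toConv (Φ.comp (braceCoaction Δ'))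
      = ν.convCompLeft
          (toConv ((Algebra.TensorProduct.map (.id R A) (comulAlgHom R A)).comp Δ')) := by
        rw [h, map_mul, map_mul, AlgHom.convCompLeft_toConv, AlgHom.convCompLeft_toConv,
          AlgHom.convCompLeft_toConv, hw, hν, hu, ← hΦ]
        exact (congrArg (toConv w * ·) (map_mul Φ.convCompLeft _ _)).trans (mul_assoc _ _ _).symm
    _ = toConv ((Algebra.TensorProduct.map (.id R A) Δ').comp Δ') := by
        rw [AlgHom.convCompLeft_toConv, ← AlgHom.comp_assoc, ← Algebra.TensorProduct.map_id_comp,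
          braceMulCoaction_comp_comulAlgHom]

lemma toConv_mul_assoc_comp_map_comp_braceCoaction
    (hΔ' : (Algebra.TensorProduct.assoc R R R A A A).toAlgHom.comp
      ((Algebra.TensorProduct.map Δ' (.id R A)).comp Δ') =
        (Algebra.TensorProduct.map (.id R A) Δ').comp Δ') :
    toConv ((Algebra.TensorProduct.map (.id R A) includeLeft).comp Δ') *
      toConv ((Algebra.TensorProduct.assoc R R R A A A).toAlgHom.comp
        ((Algebra.TensorProduct.map Δ' (.id R A)).comp (braceCoaction Δ'))) =
      toConv ((Algebra.TensorProduct.map (.id R A) Δ').comp Δ') := by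
  let Ψ := (Algebra.TensorProduct.assoc R R R A A A).toAlgHom.comp
    (Algebra.TensorProduct.map Δ' (.id R A))
  have hΨ : Ψ.comp includeLeft = (Algebra.TensorProduct.map (.id R A) includeLeft).comp Δ' := by
    rw [AlgHom.comp_assoc, Algebra.TensorProduct.map_comp_includeLeft, ← AlgHom.comp_assoc]
    congr 1
    exact Algebra.TensorProduct.ext' fun _ _ => rfl
  calc toConv ((Algebra.TensorProduct.map (.id R A) includeLeft).comp Δ') *
        toConv (Ψ.comp (braceCoaction Δ'))
      = Ψ.convCompLeft (toConv includeLeft * toConv (braceCoaction Δ')) := by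
        rw [map_mul, AlgHom.convCompLeft_toConv, AlgHom.convCompLeft_toConv, hΨ]
    _ = toConv ((Algebra.TensorProduct.map (.id R A) Δ').comp Δ') := by
        rw [includeLeft_mul_braceCoaction, AlgHom.convCompLeft_toConv, ← hΔ']
        rfl

lemma IsBraceCompatible.braceCoaction_coassoc (h : IsBraceCompatible Δ')
    (hΔ' : (Algebra.TensorProduct.assoc R R R A A A).toAlgHom.comp
      ((Algebra.TensorProduct.map Δ' (.id R A)).comp Δ') =
        (Algebra.TensorProduct.map (.id R A) Δ').comp Δ') :
    (Algebra.TensorProduct.map (.id R A) (braceCoaction Δ')).comp (braceCoaction Δ') =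
      (Algebra.TensorProduct.assoc R R R A A A).toAlgHom.comp
        ((Algebra.TensorProduct.map Δ' (.id R A)).comp (braceCoaction Δ')) :=
  congrArg ofConv <| toConv_mul_left_cancel _ <|
    h.toConv_mul_map_braceCoaction_comp.trans
      (toConv_mul_assoc_comp_map_comp_braceCoaction hΔ').symm

end BraceCoaction

section LinearMaps

variable {k} {A : Type*} [CommRing A] [HopfAlgebra k A]

lemma isBraceCompatible_of_braceLHS_eq_braceRHS {Δ' : A →ₐ[k] A ⊗[k] A}
    (h : ∀ a, braceLHS k A Coalgebra.comul Δ'.toLinearMap a =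
      braceRHS k A Coalgebra.comul Δ'.toLinearMap (antipode k) a) :
    IsBraceCompatible Δ' := by
  apply WithConv.ext; apply AlgHom.toLinearMap_injective; apply WithConv.toConv_injective
  rw [AlgHom.toLinearMap_convMul, AlgHom.toLinearMap_convMul, mul_assoc, LinearMap.convMul_def,
    LinearMap.convMul_def]
  apply WithConv.ext
  refine (LinearMap.ext h).trans ?_
  have hF : map LinearMap.id (ι₁ k A A) =
      (Algebra.TensorProduct.map (AlgHom.id k A) includeLeft).toLinearMap :=
    TensorProduct.ext' fun _ _ => rfl
  have hG : ι₁ k A (A ⊗[k] A) = includeLeft.toLinearMap := rfl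
  have hH : map LinearMap.id (ι₂ k A A) =
      (Algebra.TensorProduct.map (AlgHom.id k A) includeRight).toLinearMap :=
    TensorProduct.ext' fun _ _ => rfl
  dsimp only
  rw [braceRHS, hF, hG, hH, ← LinearMap.comp_assoc, ← LinearMap.comp_assoc,
    ← LinearMap.comp_assoc]
  refine congrArg (fun f : A ⊗[k] A →ₗ[k] A ⊗[k] (A ⊗[k] A) => f ∘ₗ Coalgebra.comul)
    (TensorProduct.ext' fun x y => ?_)
  simp [mul₃]

lemma leftCoaction_of_algHom {ρ Δ' : A →ₐ[k] A ⊗[k] A} {ε' : A →ₐ[k] k}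
    (hcoassoc : (Algebra.TensorProduct.map (.id k A) ρ).comp ρ =
      (Algebra.TensorProduct.assoc k k k A A A).toAlgHom.comp
        ((Algebra.TensorProduct.map Δ' (.id k A)).comp ρ))
    (hcounit : (Algebra.TensorProduct.lid k A).toAlgHom.comp
      ((Algebra.TensorProduct.map ε' (.id k A)).comp ρ) = .id k A) :
    LeftCoaction k A A Δ'.toLinearMap ε'.toLinearMap ρ.toLinearMap :=
  ⟨AlgHom.congr_fun hcoassoc, AlgHom.congr_fun hcounit⟩

end LinearMaps

namespace HopfBrace

variable {k} {A : Type*} [CommRing A] [Algebra k A] (HB : HopfBrace k A)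

def coaction : A →ₐ[k] A ⊗[k] A :=
  letI := HB.fst.toHopfAlgebra
  braceCoaction HB.snd.comulAlgHom

lemma ρmap_eq_coaction : ρmap k A HB.fst.Δ HB.snd.Δ HB.fst.S = HB.coaction.toLinearMap := rfl

theorem leftCoaction_coaction :
    LeftCoaction k A A HB.snd.Δ HB.snd.ε HB.coaction.toLinearMap := by
  let _ := HB.fst.toHopfAlgebra
  have h : IsBraceCompatible HB.snd.comulAlgHom :=
    isBraceCompatible_of_braceLHS_eq_braceRHS HB.compat
  exact leftCoaction_of_algHom (Δ' := HB.snd.comulAlgHom) (ε' := HB.snd.counitAlgHom)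
    (h.braceCoaction_coassoc HB.snd.assoc_comp_map_comulAlgHom_comp_comulAlgHom)
    (h.lid_comp_map_comp_braceCoaction HB.snd.lid_comp_map_counitAlgHom_comp_comulAlgHom)

end HopfBrace

/-- Lemma 2.8(1).  Let `(A, Δ, Δ')` be a commutative Hopf
brace with antipode `S` for `Δ`.  Then `ρ(a) = S(a_1) a_{21'} ⊗ a_{22'}` makes
`A` a left comodule algebra over `(A, Δ')`: `ρ` is a coassociative counital
left `(A, Δ')`-coaction and an algebra homomorphism (in particular
`ρ(ab) = ρ(a) ρ(b)` and `ρ(1) = 1 ⊗ 1`). -/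
theorem lemma_2_8_1 {k : Type*} [Field k] {A : Type*} [Ring A] [Algebra k A]
    (HB : HopfBrace k A) (hcomm : ∀ x y : A, x * y = y * x) :
    LeftCoaction k A A HB.snd.Δ HB.snd.ε
        (ρmap k A HB.fst.Δ HB.snd.Δ HB.fst.S) ∧
    IsAlgebraMorphism k A (A ⊗[k] A)
        (ρmap k A HB.fst.Δ HB.snd.Δ HB.fst.S) := by
  let _ : CommRing A := { ‹Ring A› with mul_comm := hcomm }
  rw [HB.ρmap_eq_coaction]
  exact ⟨HB.leftCoaction_coaction, map_mul HB.coaction, map_one HB.coaction⟩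

end HopfPaper
end
end

section
/- Let (A, Δ, Δ') be a commutative Hopf brace with antipode S for Δ, and write ρ(a) = a_{(-1)} ⊗ a_{(0)} = S(a_1) a_{21'} ⊗ a_{22'}. Then (id ⊗ S)∘ρ = ρ∘S, i.e. for all a ∈ A: a_{(-1)} ⊗ S(a_{(0)}) = (S(a))_{(-1)} ⊗ (S(a))_{(0)}. -/
open TensorProduct

noncomputable section

namespace HopfPaper

variable (k : Type*) [Field k]

section ConvGeneric
variable {k : Type*} [Field k]
variable {M : Type*} [AddCommGroup M] [Module k M]
variable {B : Type*} [Ring B] [Algebra k B]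

/-- convolution product on `Hom(M, B)` for a "coalgebra" `(M, Δc)`. -/
def conv (Δc : M →ₗ[k] M ⊗[k] M) (f g : M →ₗ[k] B) : M →ₗ[k] B :=
  LinearMap.mul' k B ∘ₗ TensorProduct.map f g ∘ₗ Δc

/-- convolution unit. -/
def cunit (εc : M →ₗ[k] k) : M →ₗ[k] B := Algebra.linearMap k B ∘ₗ εc

lemma conv_apply (Δc : M →ₗ[k] M ⊗[k] M) (f g : M →ₗ[k] B) (m : M) :
    conv Δc f g m = LinearMap.mul' k B (TensorProduct.map f g (Δc m)) := rfl

lemma cunit_apply (εc : M →ₗ[k] k) (m : M) :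
    (cunit εc : M →ₗ[k] B) m = algebraMap k B (εc m) := rfl

lemma unit_mul (f : M →ₗ[k] B) : (LinearMap.mul' k B) ∘ₗ TensorProduct.map (Algebra.linearMap k B) f
    = f ∘ₗ (TensorProduct.lid k M).toLinearMap := by
  apply TensorProduct.ext'; intro c x
  simp [Algebra.smul_def]

lemma mul_unit (f : M →ₗ[k] B) : (LinearMap.mul' k B) ∘ₗ TensorProduct.map f (Algebra.linearMap k B)
    = f ∘ₗ (TensorProduct.rid k M).toLinearMap := by
  apply TensorProduct.ext'; intro x c
  simp [Algebra.smul_def, ← Algebra.commutes]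

lemma mulmap_assoc (f g h : M →ₗ[k] B) :
    (LinearMap.mul' k B) ∘ₗ TensorProduct.map ((LinearMap.mul' k B) ∘ₗ TensorProduct.map f g) h
    = ((LinearMap.mul' k B) ∘ₗ TensorProduct.map f ((LinearMap.mul' k B) ∘ₗ TensorProduct.map g h))
        ∘ₗ (TensorProduct.assoc k M M M).toLinearMap := by
  ext x y z; simp [mul_assoc]

lemma conv_assoc (Δc : M →ₗ[k] M ⊗[k] M)
    (hco : ∀ m : M, TensorProduct.map LinearMap.id Δc (Δc m)
      = TensorProduct.assoc k M M M (TensorProduct.map Δc LinearMap.id (Δc m)))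
    (f g h : M →ₗ[k] B) :
    conv Δc (conv Δc f g) h = conv Δc f (conv Δc g h) := by
  apply LinearMap.ext; intro m
  have e1 : TensorProduct.map (conv Δc f g) h
      = (TensorProduct.map ((LinearMap.mul' k B) ∘ₗ TensorProduct.map f g) h)
          ∘ₗ (TensorProduct.map Δc LinearMap.id) := by
    rw [← TensorProduct.map_comp]; rfl
  have e2 : TensorProduct.map f (conv Δc g h)
      = (TensorProduct.map f ((LinearMap.mul' k B) ∘ₗ TensorProduct.map g h))
          ∘ₗ (TensorProduct.map LinearMap.id Δc) := by
    rw [← TensorProduct.map_comp]; rfl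
  rw [conv_apply, conv_apply, e1, e2]
  simp only [LinearMap.comp_apply]
  rw [hco m, ← LinearMap.comp_apply, ← LinearMap.comp_apply ((LinearMap.mul' k B)), ← LinearMap.comp_apply]
  rw [mulmap_assoc]
  rfl

lemma conv_cunit_left (Δc : M →ₗ[k] M ⊗[k] M) (εc : M →ₗ[k] k)
    (hcl : ∀ m : M, TensorProduct.lid k M (TensorProduct.map εc LinearMap.id (Δc m)) = m)
    (f : M →ₗ[k] B) : conv Δc (cunit εc) f = f := by
  apply LinearMap.ext; intro m
  have e1 : TensorProduct.map (cunit εc : M →ₗ[k] B) f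
      = (TensorProduct.map (Algebra.linearMap k B) f) ∘ₗ (TensorProduct.map εc LinearMap.id) := by
    rw [← TensorProduct.map_comp]; rfl
  rw [conv_apply, e1]
  simp only [LinearMap.comp_apply]
  rw [← LinearMap.comp_apply (LinearMap.mul' k B), unit_mul]
  simp only [LinearMap.comp_apply, LinearEquiv.coe_toLinearMap]
  rw [hcl m]

lemma conv_cunit_right (Δc : M →ₗ[k] M ⊗[k] M) (εc : M →ₗ[k] k)
    (hcr : ∀ m : M, TensorProduct.rid k M (TensorProduct.map LinearMap.id εc (Δc m)) = m)
    (f : M →ₗ[k] B) : conv Δc f (cunit εc) = f := by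
  apply LinearMap.ext; intro m
  have e1 : TensorProduct.map f (cunit εc : M →ₗ[k] B)
      = (TensorProduct.map f (Algebra.linearMap k B)) ∘ₗ (TensorProduct.map LinearMap.id εc) := by
    rw [← TensorProduct.map_comp]; rfl
  rw [conv_apply, e1]
  simp only [LinearMap.comp_apply]
  rw [← LinearMap.comp_apply (LinearMap.mul' k B), mul_unit]
  simp only [LinearMap.comp_apply, LinearEquiv.coe_toLinearMap]
  rw [hcr m]

lemma conv_inv_unique (Δc : M →ₗ[k] M ⊗[k] M) (εc : M →ₗ[k] k)
    (hco : ∀ m : M, TensorProduct.map LinearMap.id Δc (Δc m)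
      = TensorProduct.assoc k M M M (TensorProduct.map Δc LinearMap.id (Δc m)))
    (hcl : ∀ m : M, TensorProduct.lid k M (TensorProduct.map εc LinearMap.id (Δc m)) = m)
    (hcr : ∀ m : M, TensorProduct.rid k M (TensorProduct.map LinearMap.id εc (Δc m)) = m)
    {x y z : M →ₗ[k] B} (h1 : conv Δc x y = cunit εc) (h2 : conv Δc z x = cunit εc) :
    z = y := by
  calc z = conv Δc z (cunit εc) := (conv_cunit_right Δc εc hcr z).symm
    _ = conv Δc z (conv Δc x y) := by rw [h1]
    _ = conv Δc (conv Δc z x) y := (conv_assoc Δc hco z x y).symm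
    _ = conv Δc (cunit εc) y := by rw [h2]
    _ = y := conv_cunit_left Δc εc hcl y

end ConvGeneric

section MulHelpers
variable {k : Type*} [Field k]

lemma tensor_map_mul {R₁ R₂ B : Type*} [Ring R₁] [Algebra k R₁] [Ring R₂] [Algebra k R₂]
    [Ring B] [Algebra k B] (L : R₁ ⊗[k] R₂ →ₗ[k] B)
    (h : ∀ (x x' : R₁) (y y' : R₂),
      L ((x * x') ⊗ₜ[k] (y * y')) = L (x ⊗ₜ[k] y) * L (x' ⊗ₜ[k] y'))
    (u v : R₁ ⊗[k] R₂) : L (u * v) = L u * L v := by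
  induction u using TensorProduct.induction_on with
  | zero => simp
  | tmul x y =>
    induction v using TensorProduct.induction_on with
    | zero => simp
    | tmul x' y' => rw [Algebra.TensorProduct.tmul_mul_tmul]; exact h x x' y y'
    | add v1 v2 h1 h2 => rw [mul_add, map_add, h1, h2, map_add, mul_add]
  | add u1 u2 h1 h2 => rw [add_mul, map_add, h1, h2, map_add, add_mul]

lemma map_mul_of_mul {A₁ A₂ B₁ B₂ : Type*} [Ring A₁] [Algebra k A₁] [Ring A₂] [Algebra k A₂]
    [Ring B₁] [Algebra k B₁] [Ring B₂] [Algebra k B₂]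
    (f : A₁ →ₗ[k] B₁) (g : A₂ →ₗ[k] B₂)
    (hf : ∀ x y, f (x * y) = f x * f y) (hg : ∀ x y, g (x * y) = g x * g y)
    (u v : A₁ ⊗[k] A₂) :
    TensorProduct.map f g (u * v) = TensorProduct.map f g u * TensorProduct.map f g v := by
  refine tensor_map_mul _ (fun x x' y y' => ?_) u v
  simp [hf, hg, Algebra.TensorProduct.tmul_mul_tmul]

lemma mul'_map_mul {R : Type*} [Ring R] [Algebra k R] (hc : ∀ x y : R, x * y = y * x)
    (u v : R ⊗[k] R) :
    LinearMap.mul' k R (u * v) = LinearMap.mul' k R u * LinearMap.mul' k R v := by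
  refine tensor_map_mul _ (fun x x' y y' => ?_) u v
  simp only [LinearMap.mul'_apply]
  rw [mul_assoc, mul_assoc, ← mul_assoc x' y y', hc x' y, mul_assoc]

lemma comm_tensor {R : Type*} [Ring R] [Algebra k R] (hc : ∀ x y : R, x * y = y * x)
    (u v : R ⊗[k] R) : u * v = v * u := by
  induction u using TensorProduct.induction_on with
  | zero => simp
  | tmul x y =>
    induction v using TensorProduct.induction_on with
    | zero => simp
    | tmul x' y' => simp [Algebra.TensorProduct.tmul_mul_tmul, hc x x', hc y y']
    | add v1 v2 h1 h2 => rw [mul_add, add_mul, h1, h2]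
  | add u1 u2 h1 h2 => rw [add_mul, mul_add, h1, h2]

@[simp] lemma ι₁_apply {M N : Type*} [Ring M] [Algebra k M] [Ring N] [Algebra k N] (x : M) :
    ι₁ k M N x = x ⊗ₜ[k] (1 : N) := rfl

@[simp] lemma ι₂_apply {M N : Type*} [Ring M] [Algebra k M] [Ring N] [Algebra k N] (y : N) :
    ι₂ k M N y = (1 : M) ⊗ₜ[k] y := rfl

lemma mul₃_tmul {T : Type*} [Ring T] [Algebra k T] (u v w : T) :
    mul₃ k T (u ⊗ₜ[k] (v ⊗ₜ[k] w)) = u * (v * w) := rfl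

end MulHelpers

section HopfBasic
variable {k : Type*} [Field k] {A : Type*} [Ring A] [Algebra k A]
variable {B : Type*} [Ring B] [Algebra k B]

/-- `f ↦ f ∘ S` gives a right convolution inverse of an algebra morphism `f`. -/
lemma algmor_conv_right (F : HopfStruct k A) (f : A →ₗ[k] B)
    (hf : ∀ a b, f (a * b) = f a * f b) (hf1 : f 1 = 1) :
    conv F.Δ f (f ∘ₗ F.S) = cunit F.ε := by
  apply LinearMap.ext; intro a
  have e1 : TensorProduct.map f (f ∘ₗ F.S)
      = TensorProduct.map f f ∘ₗ TensorProduct.map LinearMap.id F.S := by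
    rw [← TensorProduct.map_comp]; rfl
  have e2 : (LinearMap.mul' k B) ∘ₗ TensorProduct.map f f = f ∘ₗ LinearMap.mul' k A := by
    apply TensorProduct.ext'; intro x y; simp [hf]
  rw [conv_apply, e1]
  simp only [LinearMap.comp_apply]
  rw [← LinearMap.comp_apply (LinearMap.mul' k B), e2]
  simp only [LinearMap.comp_apply]
  rw [F.antipode_right a, cunit_apply]
  rw [Algebra.algebraMap_eq_smul_one, Algebra.algebraMap_eq_smul_one, map_smul, hf1]

lemma algmor_conv_left (F : HopfStruct k A) (f : A →ₗ[k] B)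
    (hf : ∀ a b, f (a * b) = f a * f b) (hf1 : f 1 = 1) :
    conv F.Δ (f ∘ₗ F.S) f = cunit F.ε := by
  apply LinearMap.ext; intro a
  have e1 : TensorProduct.map (f ∘ₗ F.S) f
      = TensorProduct.map f f ∘ₗ TensorProduct.map F.S LinearMap.id := by
    rw [← TensorProduct.map_comp]; rfl
  have e2 : (LinearMap.mul' k B) ∘ₗ TensorProduct.map f f = f ∘ₗ LinearMap.mul' k A := by
    apply TensorProduct.ext'; intro x y; simp [hf]
  rw [conv_apply, e1]
  simp only [LinearMap.comp_apply]
  rw [← LinearMap.comp_apply (LinearMap.mul' k B), e2]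
  simp only [LinearMap.comp_apply]
  rw [F.antipode_left a, cunit_apply]
  rw [Algebra.algebraMap_eq_smul_one, Algebra.algebraMap_eq_smul_one, map_smul, hf1]

lemma conv_id_S (F : HopfStruct k A) : conv F.Δ LinearMap.id F.S = cunit F.ε := by
  apply LinearMap.ext; intro a
  rw [conv_apply, cunit_apply]; exact F.antipode_right a

lemma conv_S_id (F : HopfStruct k A) : conv F.Δ F.S LinearMap.id = cunit F.ε := by
  apply LinearMap.ext; intro a
  rw [conv_apply, cunit_apply]; exact F.antipode_left a

lemma S_one (F : HopfStruct k A) : F.S 1 = 1 := by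
  have := F.antipode_left 1
  rw [F.comul_one, Algebra.TensorProduct.one_def] at this
  simpa [F.counit_one] using this

end HopfBasic

section SMul
variable {k : Type*} [Field k] {A : Type*} [Ring A] [Algebra k A]

/-- tensor-square comultiplication on `A ⊗ A`. -/
def comul2 (F : HopfStruct k A) : (A ⊗[k] A) →ₗ[k] (A ⊗[k] A) ⊗[k] (A ⊗[k] A) :=
  (TensorProduct.tensorTensorTensorComm k A A A A).toLinearMap ∘ₗ TensorProduct.map F.Δ F.Δ

/-- tensor-square counit on `A ⊗ A`. -/
def counit2 (F : HopfStruct k A) : (A ⊗[k] A) →ₗ[k] k :=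
  LinearMap.mul' k k ∘ₗ TensorProduct.map F.ε F.ε

lemma comul2_tmul (F : HopfStruct k A) (a b : A) :
    comul2 F (a ⊗ₜ[k] b)
      = (TensorProduct.tensorTensorTensorComm k A A A A) (F.Δ a ⊗ₜ[k] F.Δ b) := rfl

lemma counit2_tmul (F : HopfStruct k A) (a b : A) :
    counit2 F (a ⊗ₜ[k] b) = F.ε a * F.ε b := rfl

lemma counit2_comul (F : HopfStruct k A) (y : A) : counit2 F (F.Δ y) = F.ε y := by
  have h1 : F.ε ∘ₗ (TensorProduct.rid k A).toLinearMap ∘ₗ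
      TensorProduct.map (LinearMap.id : A →ₗ[k] A) F.ε = counit2 F := by
    apply TensorProduct.ext'; intro x y
    simp [counit2, mul_comm]
  have h2 := LinearMap.congr_fun h1 (F.Δ y)
  simp only [LinearMap.comp_apply, LinearEquiv.coe_toLinearMap] at h2
  rw [← h2, F.counit_right]

lemma comul2_counit_left (F : HopfStruct k A) (u : A ⊗[k] A) :
    TensorProduct.lid k (A ⊗[k] A)
      (TensorProduct.map (counit2 F) LinearMap.id (comul2 F u)) = u := by
  have H1 : (TensorProduct.lid k (A ⊗[k] A)).toLinearMap
      ∘ₗ TensorProduct.map (counit2 F) LinearMap.id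
      ∘ₗ (TensorProduct.tensorTensorTensorComm k A A A A).toLinearMap
      = TensorProduct.map
          ((TensorProduct.lid k A).toLinearMap ∘ₗ TensorProduct.map F.ε LinearMap.id)
          ((TensorProduct.lid k A).toLinearMap ∘ₗ TensorProduct.map F.ε LinearMap.id) := by
    ext x y z w
    simp [counit2, TensorProduct.smul_tmul', TensorProduct.tmul_smul, mul_smul]
    rw [smul_comm]
  have Hmap : (TensorProduct.lid k (A ⊗[k] A)).toLinearMap
      ∘ₗ TensorProduct.map (counit2 F) LinearMap.id ∘ₗ comul2 F
      = (LinearMap.id : A ⊗[k] A →ₗ[k] A ⊗[k] A) := by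
    apply TensorProduct.ext'; intro a b
    simp only [LinearMap.comp_apply, LinearEquiv.coe_toLinearMap, LinearMap.id_apply]
    rw [comul2_tmul]
    have h2 := LinearMap.congr_fun H1 (F.Δ a ⊗ₜ[k] F.Δ b)
    simp only [LinearMap.comp_apply, LinearEquiv.coe_toLinearMap] at h2
    rw [h2, TensorProduct.map_tmul]
    simp only [LinearMap.comp_apply, LinearEquiv.coe_toLinearMap]
    rw [F.counit_left a, F.counit_left b]
  have := LinearMap.congr_fun Hmap u
  simpa using this

lemma comul2_counit_right (F : HopfStruct k A) (u : A ⊗[k] A) :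
    TensorProduct.rid k (A ⊗[k] A)
      (TensorProduct.map LinearMap.id (counit2 F) (comul2 F u)) = u := by
  have H1 : (TensorProduct.rid k (A ⊗[k] A)).toLinearMap
      ∘ₗ TensorProduct.map LinearMap.id (counit2 F)
      ∘ₗ (TensorProduct.tensorTensorTensorComm k A A A A).toLinearMap
      = TensorProduct.map
          ((TensorProduct.rid k A).toLinearMap ∘ₗ TensorProduct.map LinearMap.id F.ε)
          ((TensorProduct.rid k A).toLinearMap ∘ₗ TensorProduct.map LinearMap.id F.ε) := by
    ext x y z w
    simp [counit2, TensorProduct.smul_tmul', TensorProduct.tmul_smul, mul_smul]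
    rw [smul_comm]
  have Hmap : (TensorProduct.rid k (A ⊗[k] A)).toLinearMap
      ∘ₗ TensorProduct.map LinearMap.id (counit2 F) ∘ₗ comul2 F
      = (LinearMap.id : A ⊗[k] A →ₗ[k] A ⊗[k] A) := by
    apply TensorProduct.ext'; intro a b
    simp only [LinearMap.comp_apply, LinearEquiv.coe_toLinearMap, LinearMap.id_apply]
    rw [comul2_tmul]
    have h2 := LinearMap.congr_fun H1 (F.Δ a ⊗ₜ[k] F.Δ b)
    simp only [LinearMap.comp_apply, LinearEquiv.coe_toLinearMap] at h2
    rw [h2, TensorProduct.map_tmul]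
    simp only [LinearMap.comp_apply, LinearEquiv.coe_toLinearMap]
    rw [F.counit_right a, F.counit_right b]
  have := LinearMap.congr_fun Hmap u
  simpa using this

lemma comul2_coassoc (F : HopfStruct k A) (u : A ⊗[k] A) :
    TensorProduct.map LinearMap.id (comul2 F) (comul2 F u)
      = TensorProduct.assoc k (A ⊗[k] A) (A ⊗[k] A) (A ⊗[k] A)
          (TensorProduct.map (comul2 F) LinearMap.id (comul2 F u)) := by
  have H2 : TensorProduct.map (LinearMap.id : A ⊗[k] A →ₗ[k] A ⊗[k] A) (comul2 F)
      ∘ₗ (TensorProduct.tensorTensorTensorComm k A A A A).toLinearMap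
      = (TensorProduct.map LinearMap.id (TensorProduct.tensorTensorTensorComm k A A A A).toLinearMap)
        ∘ₗ (TensorProduct.tensorTensorTensorComm k A (A ⊗[k] A) A (A ⊗[k] A)).toLinearMap
        ∘ₗ (TensorProduct.map (TensorProduct.map LinearMap.id F.Δ) (TensorProduct.map LinearMap.id F.Δ)) := by
    ext x y z w
    simp [comul2]
  have H3 : TensorProduct.map (comul2 F) (LinearMap.id : A ⊗[k] A →ₗ[k] A ⊗[k] A)
      ∘ₗ (TensorProduct.tensorTensorTensorComm k A A A A).toLinearMap
      = (TensorProduct.map (TensorProduct.tensorTensorTensorComm k A A A A).toLinearMap LinearMap.id)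
        ∘ₗ (TensorProduct.tensorTensorTensorComm k (A ⊗[k] A) A (A ⊗[k] A) A).toLinearMap
        ∘ₗ (TensorProduct.map (TensorProduct.map F.Δ LinearMap.id) (TensorProduct.map F.Δ LinearMap.id)) := by
    ext x y z w
    simp [comul2]
  have H4 : (TensorProduct.map (LinearMap.id : A ⊗[k] A →ₗ[k] A ⊗[k] A)
        (TensorProduct.tensorTensorTensorComm k A A A A).toLinearMap)
      ∘ₗ (TensorProduct.tensorTensorTensorComm k A (A ⊗[k] A) A (A ⊗[k] A)).toLinearMap
      ∘ₗ (TensorProduct.map (TensorProduct.assoc k A A A).toLinearMap (TensorProduct.assoc k A A A).toLinearMap)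
      = (TensorProduct.assoc k (A ⊗[k] A) (A ⊗[k] A) (A ⊗[k] A)).toLinearMap
        ∘ₗ (TensorProduct.map (TensorProduct.tensorTensorTensorComm k A A A A).toLinearMap LinearMap.id)
        ∘ₗ (TensorProduct.tensorTensorTensorComm k (A ⊗[k] A) A (A ⊗[k] A) A).toLinearMap := by
    ext x1 x2 x3 z1 z2 z3
    simp
  have Hmap : TensorProduct.map (LinearMap.id : A ⊗[k] A →ₗ[k] A ⊗[k] A) (comul2 F) ∘ₗ comul2 F
      = (TensorProduct.assoc k (A ⊗[k] A) (A ⊗[k] A) (A ⊗[k] A)).toLinearMap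
          ∘ₗ TensorProduct.map (comul2 F) LinearMap.id ∘ₗ comul2 F := by
    apply TensorProduct.ext'; intro a b
    simp only [LinearMap.comp_apply, LinearEquiv.coe_toLinearMap]
    rw [comul2_tmul]
    have e2 := LinearMap.congr_fun H2 (F.Δ a ⊗ₜ[k] F.Δ b)
    have e3 := LinearMap.congr_fun H3 (F.Δ a ⊗ₜ[k] F.Δ b)
    simp only [LinearMap.comp_apply, LinearEquiv.coe_toLinearMap, TensorProduct.map_tmul] at e2 e3
    rw [e2, e3, F.coassoc a, F.coassoc b]
    have e4 := LinearMap.congr_fun H4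
      ((TensorProduct.map F.Δ LinearMap.id (F.Δ a)) ⊗ₜ[k] (TensorProduct.map F.Δ LinearMap.id (F.Δ b)))
    simp only [LinearMap.comp_apply, LinearEquiv.coe_toLinearMap, TensorProduct.map_tmul] at e4
    exact e4
  have := LinearMap.congr_fun Hmap u
  simpa using this

end SMul

section SMul2
variable {k : Type*} [Field k] {A : Type*} [Ring A] [Algebra k A]

lemma S_mul_map (F : HopfStruct k A) (hcomm : ∀ x y : A, x * y = y * x) :
    F.S ∘ₗ LinearMap.mul' k A = LinearMap.mul' k A ∘ₗ TensorProduct.map F.S F.S := by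
  have h1 : conv (comul2 F) (LinearMap.mul' k A)
      (LinearMap.mul' k A ∘ₗ TensorProduct.map F.S F.S) = cunit (counit2 F) := by
    have H5 : LinearMap.mul' k A ∘ₗ TensorProduct.map (LinearMap.mul' k A)
          (LinearMap.mul' k A ∘ₗ TensorProduct.map F.S F.S)
        ∘ₗ (TensorProduct.tensorTensorTensorComm k A A A A).toLinearMap
        = LinearMap.mul' k A ∘ₗ TensorProduct.map
            (LinearMap.mul' k A ∘ₗ TensorProduct.map LinearMap.id F.S)
            (LinearMap.mul' k A ∘ₗ TensorProduct.map LinearMap.id F.S) := by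
      ext x y z w
      simp [mul_assoc]
      rw [← mul_assoc z (F.S y), hcomm z (F.S y), mul_assoc]
    apply TensorProduct.ext'; intro a b
    rw [conv_apply, comul2_tmul]
    have e5 := LinearMap.congr_fun H5 (F.Δ a ⊗ₜ[k] F.Δ b)
    simp only [LinearMap.comp_apply, LinearEquiv.coe_toLinearMap] at e5 ⊢
    rw [e5, TensorProduct.map_tmul, LinearMap.mul'_apply]
    simp only [LinearMap.comp_apply]
    rw [F.antipode_right a, F.antipode_right b, cunit_apply, counit2_tmul, map_mul]
  have h2 : conv (comul2 F) (F.S ∘ₗ LinearMap.mul' k A) (LinearMap.mul' k A)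
      = cunit (counit2 F) := by
    have H6 : LinearMap.mul' k A ∘ₗ TensorProduct.map (F.S ∘ₗ LinearMap.mul' k A)
          (LinearMap.mul' k A)
        ∘ₗ (TensorProduct.tensorTensorTensorComm k A A A A).toLinearMap
        = (LinearMap.mul' k A ∘ₗ TensorProduct.map F.S LinearMap.id)
            ∘ₗ LinearMap.mul' k (A ⊗[k] A) := by
      ext x y z w
      simp [Algebra.TensorProduct.tmul_mul_tmul]
    apply TensorProduct.ext'; intro a b
    rw [conv_apply, comul2_tmul]
    have e6 := LinearMap.congr_fun H6 (F.Δ a ⊗ₜ[k] F.Δ b)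
    simp only [LinearMap.comp_apply, LinearEquiv.coe_toLinearMap] at e6 ⊢
    rw [e6, LinearMap.mul'_apply, ← F.comul_mul a b]
    rw [← LinearMap.comp_apply, ← LinearMap.comp_apply]
    have := F.antipode_left (a * b)
    simp only [LinearMap.comp_apply] at this ⊢
    rw [this, cunit_apply, counit2_tmul, F.counit_mul, map_mul]
  exact conv_inv_unique (comul2 F) (counit2 F) (comul2_coassoc F)
    (comul2_counit_left F) (comul2_counit_right F) h1 h2

lemma S_mul (F : HopfStruct k A) (hcomm : ∀ x y : A, x * y = y * x) (a b : A) :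
    F.S (a * b) = F.S a * F.S b := by
  have := LinearMap.congr_fun (S_mul_map F hcomm) (a ⊗ₜ[k] b)
  simpa using this

end SMul2

section RhoG
variable {k : Type*} [Field k] {A : Type*} [Ring A] [Algebra k A]

lemma ρmap_apply (F G : HopfStruct k A) (a : A) :
    ρmap k A F.Δ G.Δ F.S a
      = LinearMap.mul' k (A ⊗[k] A)
          (TensorProduct.map ((ι₁ k A A) ∘ₗ F.S) G.Δ (F.Δ a)) := rfl

lemma ρ_one (F G : HopfStruct k A) : ρmap k A F.Δ G.Δ F.S 1 = 1 := by
  rw [ρmap_apply, F.comul_one, Algebra.TensorProduct.one_def, TensorProduct.map_tmul]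
  simp [S_one F, G.comul_one, Algebra.TensorProduct.one_def]

lemma ρ_mul (F G : HopfStruct k A) (hcomm : ∀ x y : A, x * y = y * x) (a b : A) :
    ρmap k A F.Δ G.Δ F.S (a * b)
      = ρmap k A F.Δ G.Δ F.S a * ρmap k A F.Δ G.Δ F.S b := by
  have hF : ∀ x y : A, ((ι₁ k A A) ∘ₗ F.S) (x * y)
      = ((ι₁ k A A) ∘ₗ F.S) x * ((ι₁ k A A) ∘ₗ F.S) y := by
    intro x y
    simp [S_mul F hcomm, Algebra.TensorProduct.tmul_mul_tmul]
  rw [ρmap_apply, F.comul_mul,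
    map_mul_of_mul ((ι₁ k A A) ∘ₗ F.S) G.Δ hF G.comul_mul,
    mul'_map_mul (comm_tensor hcomm)]
  rfl

lemma ρ_mul_map (F G : HopfStruct k A) (hcomm : ∀ x y : A, x * y = y * x) :
    LinearMap.mul' k (A ⊗[k] A)
        ∘ₗ TensorProduct.map (ρmap k A F.Δ G.Δ F.S) (ρmap k A F.Δ G.Δ F.S)
      = ρmap k A F.Δ G.Δ F.S ∘ₗ LinearMap.mul' k A := by
  apply TensorProduct.ext'; intro a b
  simp [ρ_mul F G hcomm]

/-- the map `g = (id ⊗ ε) ∘ Δ'`. -/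
def gmap (F G : HopfStruct k A) : A →ₗ[k] A :=
  (TensorProduct.rid k A).toLinearMap ∘ₗ TensorProduct.map LinearMap.id F.ε ∘ₗ G.Δ

lemma P₀_mul (F : HopfStruct k A) (u v : A ⊗[k] A) :
    ((TensorProduct.rid k A).toLinearMap ∘ₗ TensorProduct.map LinearMap.id F.ε) (u * v)
      = ((TensorProduct.rid k A).toLinearMap ∘ₗ TensorProduct.map LinearMap.id F.ε) u
        * ((TensorProduct.rid k A).toLinearMap ∘ₗ TensorProduct.map LinearMap.id F.ε) v := by
  refine tensor_map_mul _ (fun x x' y y' => ?_) u v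
  simp [F.counit_mul, mul_smul, smul_mul_assoc, mul_smul_comm]
  rw [smul_comm]

lemma gmap_mul (F G : HopfStruct k A) (a b : A) :
    gmap F G (a * b) = gmap F G a * gmap F G b := by
  simp only [gmap, LinearMap.comp_apply, G.comul_mul]
  exact P₀_mul F (G.Δ a) (G.Δ b)

lemma gmap_one (F G : HopfStruct k A) : gmap F G 1 = 1 := by
  simp [gmap, G.comul_one, Algebra.TensorProduct.one_def, F.counit_one]

lemma gmap_conv (F G : HopfStruct k A)
    (hcompat : ∀ h : A, braceLHS k A F.Δ G.Δ h = braceRHS k A F.Δ G.Δ F.S h) :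
    gmap F G = conv F.Δ (gmap F G) (conv F.Δ F.S (gmap F G)) := by
  set Φ : A ⊗[k] (A ⊗[k] A) →ₗ[k] A :=
    (TensorProduct.rid k A).toLinearMap ∘ₗ TensorProduct.map LinearMap.id (counit2 F) with hΦ
  have e_lhs : Φ ∘ₗ braceLHS k A F.Δ G.Δ = gmap F G := by
    have hc2 : counit2 F ∘ₗ F.Δ = F.ε := LinearMap.ext (counit2_comul F)
    have : Φ ∘ₗ TensorProduct.map (LinearMap.id : A →ₗ[k] A) F.Δ
        = (TensorProduct.rid k A).toLinearMap ∘ₗ TensorProduct.map LinearMap.id F.ε := by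
      rw [hΦ, LinearMap.comp_assoc, ← TensorProduct.map_comp, hc2, LinearMap.comp_id]
    show Φ ∘ₗ (TensorProduct.map (LinearMap.id : A →ₗ[k] A) F.Δ) ∘ₗ G.Δ = gmap F G
    rw [← LinearMap.comp_assoc, this]; rfl
  have H8 : Φ ∘ₗ mul₃ k (A ⊗[k] (A ⊗[k] A)) ∘ₗ
      (TensorProduct.map ((TensorProduct.map LinearMap.id (ι₁ k A A)) ∘ₗ G.Δ)
        (TensorProduct.map ((ι₁ k A (A ⊗[k] A)) ∘ₗ F.S)
          ((TensorProduct.map LinearMap.id (ι₂ k A A)) ∘ₗ G.Δ)))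
      = LinearMap.mul' k A ∘ₗ TensorProduct.map (gmap F G)
          (LinearMap.mul' k A ∘ₗ TensorProduct.map F.S (gmap F G)) := by
    ext x y z
    show Φ (mul₃ k _ ((TensorProduct.map LinearMap.id (ι₁ k A A)) (G.Δ x)
        ⊗ₜ[k] ((F.S y ⊗ₜ[k] (1 : A ⊗[k] A))
          ⊗ₜ[k] (TensorProduct.map LinearMap.id (ι₂ k A A)) (G.Δ z))))
      = gmap F G x * (F.S y * gmap F G z)
    have hg : ∀ w : A, gmap F G w
        = ((TensorProduct.rid k A).toLinearMap ∘ₗ TensorProduct.map LinearMap.id F.ε) (G.Δ w) := by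
      intro w; rfl
    rw [hg x, hg z]
    generalize G.Δ x = u
    generalize G.Δ z = v
    induction u using TensorProduct.induction_on with
    | zero =>
      simp only [TensorProduct.zero_tmul, TensorProduct.tmul_zero, LinearMap.map_zero,
        zero_mul, mul_zero]
    | tmul u₁ u₂ =>
      induction v using TensorProduct.induction_on with
      | zero =>
        simp only [TensorProduct.zero_tmul, TensorProduct.tmul_zero, LinearMap.map_zero,
          zero_mul, mul_zero]
      | tmul v₁ v₂ =>
        simp [mul₃, hΦ, Algebra.TensorProduct.one_def, counit2_tmul,
          Algebra.TensorProduct.tmul_mul_tmul, mul_smul, smul_mul_assoc,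
          mul_smul_comm, mul_assoc]
        rw [smul_comm]
      | add v1 v2 h1 h2 =>
        simp only [map_add, mul_add, TensorProduct.tmul_add, h1, h2]
    | add u1 u2 h1 h2 =>
      simp only [map_add, add_mul, TensorProduct.add_tmul, h1, h2]
  have e_rhs : Φ ∘ₗ braceRHS k A F.Δ G.Δ F.S
      = conv F.Δ (gmap F G) (conv F.Δ F.S (gmap F G)) := by
    have e1 : conv F.Δ (gmap F G) (conv F.Δ F.S (gmap F G))
        = (LinearMap.mul' k A ∘ₗ TensorProduct.map (gmap F G)
            (LinearMap.mul' k A ∘ₗ TensorProduct.map F.S (gmap F G)))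
          ∘ₗ (TensorProduct.map (LinearMap.id : A →ₗ[k] A) F.Δ) ∘ₗ F.Δ := by
      show LinearMap.mul' k A ∘ₗ (TensorProduct.map (gmap F G) (conv F.Δ F.S (gmap F G))) ∘ₗ F.Δ = _
      have : TensorProduct.map (gmap F G) (conv F.Δ F.S (gmap F G))
          = (TensorProduct.map (gmap F G)
              (LinearMap.mul' k A ∘ₗ TensorProduct.map F.S (gmap F G)))
            ∘ₗ (TensorProduct.map (LinearMap.id : A →ₗ[k] A) F.Δ) := by
        rw [← TensorProduct.map_comp]; rfl
      rw [this]
      rfl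
    rw [e1, ← H8]
    rfl
  apply LinearMap.ext; intro h
  have l1 := LinearMap.congr_fun e_lhs h
  have l2 := LinearMap.congr_fun e_rhs h
  simp only [LinearMap.comp_apply] at l1 l2
  rw [← l1, hcompat h, l2]

lemma gmap_eq_id (F G : HopfStruct k A)
    (hcompat : ∀ h : A, braceLHS k A F.Δ G.Δ h = braceRHS k A F.Δ G.Δ F.S h) :
    gmap F G = LinearMap.id := by
  have inv2 : conv F.Δ ((gmap F G) ∘ₗ F.S) (gmap F G) = cunit F.ε :=
    algmor_conv_left F (gmap F G) (gmap_mul F G) (gmap_one F G)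
  have step : conv F.Δ F.S (gmap F G) = cunit F.ε := by
    have t1 : conv F.Δ ((gmap F G) ∘ₗ F.S)
        (conv F.Δ (gmap F G) (conv F.Δ F.S (gmap F G))) = cunit F.ε := by
      rw [← gmap_conv F G hcompat]; exact inv2
    rw [← conv_assoc F.Δ F.coassoc, inv2,
      conv_cunit_left F.Δ F.ε F.counit_left] at t1
    exact t1
  have t2 : conv F.Δ LinearMap.id (conv F.Δ F.S (gmap F G))
      = conv F.Δ LinearMap.id (cunit F.ε) := by rw [step]
  rw [← conv_assoc F.Δ F.coassoc, conv_id_S F,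
    conv_cunit_left F.Δ F.ε F.counit_left,
    conv_cunit_right F.Δ F.ε F.counit_right] at t2
  exact t2

end RhoG

section Claims
variable {k : Type*} [Field k] {A : Type*} [Ring A] [Algebra k A]

lemma claimB (F G : HopfStruct k A)
    (hcompat : ∀ h : A, braceLHS k A F.Δ G.Δ h = braceRHS k A F.Δ G.Δ F.S h) :
    TensorProduct.map (LinearMap.id : A →ₗ[k] A) (Algebra.linearMap k A ∘ₗ F.ε)
        ∘ₗ ρmap k A F.Δ G.Δ F.S
      = (cunit F.ε : A →ₗ[k] A ⊗[k] A) := by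
  have J : (TensorProduct.map (LinearMap.id : A →ₗ[k] A) (Algebra.linearMap k A ∘ₗ F.ε))
      ∘ₗ LinearMap.mul' k (A ⊗[k] A)
      ∘ₗ (TensorProduct.map (ι₁ k A A) (LinearMap.id : A ⊗[k] A →ₗ[k] A ⊗[k] A))
      = (ι₁ k A A) ∘ₗ LinearMap.mul' k A
        ∘ₗ (TensorProduct.map (LinearMap.id : A →ₗ[k] A)
            ((TensorProduct.rid k A).toLinearMap ∘ₗ TensorProduct.map LinearMap.id F.ε)) := by
    ext x y z
    simp [Algebra.algebraMap_eq_smul_one, TensorProduct.smul_tmul', TensorProduct.tmul_smul]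
  have d1 : TensorProduct.map ((ι₁ k A A) ∘ₗ F.S) G.Δ
      = (TensorProduct.map (ι₁ k A A) (LinearMap.id : A ⊗[k] A →ₗ[k] A ⊗[k] A))
        ∘ₗ TensorProduct.map F.S G.Δ := by
    rw [← TensorProduct.map_comp, LinearMap.id_comp]
  have d2 : (TensorProduct.map (LinearMap.id : A →ₗ[k] A)
        ((TensorProduct.rid k A).toLinearMap ∘ₗ TensorProduct.map LinearMap.id F.ε))
      ∘ₗ TensorProduct.map F.S G.Δ
      = TensorProduct.map F.S (LinearMap.id : A →ₗ[k] A) := by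
    rw [← TensorProduct.map_comp, LinearMap.id_comp]
    have : ((TensorProduct.rid k A).toLinearMap ∘ₗ TensorProduct.map LinearMap.id F.ε) ∘ₗ G.Δ
        = gmap F G := rfl
    rw [this, gmap_eq_id F G hcompat]
  apply LinearMap.ext; intro a
  show TensorProduct.map LinearMap.id (Algebra.linearMap k A ∘ₗ F.ε)
      (LinearMap.mul' k (A ⊗[k] A) (TensorProduct.map ((ι₁ k A A) ∘ₗ F.S) G.Δ (F.Δ a))) = _
  rw [d1]
  have eJ := LinearMap.congr_fun J (TensorProduct.map F.S G.Δ (F.Δ a))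
  simp only [LinearMap.comp_apply] at eJ ⊢
  rw [eJ]
  have ed2 := LinearMap.congr_fun d2 (F.Δ a)
  simp only [LinearMap.comp_apply] at ed2
  rw [ed2, F.antipode_left a, cunit_apply]
  simp [Algebra.TensorProduct.algebraMap_apply]

/-- auxiliary maps for `claimA`. -/
def P1D (F G : HopfStruct k A) : A ⊗[k] A →ₗ[k] A ⊗[k] (A ⊗[k] A) :=
  (TensorProduct.map (LinearMap.id : A →ₗ[k] A) (ι₁ k A A))
    ∘ₗ LinearMap.mul' k (A ⊗[k] A)
    ∘ₗ TensorProduct.map ((ι₁ k A A) ∘ₗ F.S) G.Δ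

/-- auxiliary maps for `claimA`. -/
def P2D (F G : HopfStruct k A) : A ⊗[k] A →ₗ[k] A ⊗[k] (A ⊗[k] A) :=
  (TensorProduct.map (LinearMap.id : A →ₗ[k] A) (ι₂ k A A))
    ∘ₗ LinearMap.mul' k (A ⊗[k] A)
    ∘ₗ TensorProduct.map ((ι₁ k A A) ∘ₗ F.S) G.Δ

/-- auxiliary map for `claimA`. -/
def BigMapD (F G : HopfStruct k A) : A ⊗[k] (A ⊗[k] A) →ₗ[k]
    (A ⊗[k] (A ⊗[k] A)) ⊗[k] ((A ⊗[k] (A ⊗[k] A)) ⊗[k] (A ⊗[k] (A ⊗[k] A))) :=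
  TensorProduct.map ((TensorProduct.map (LinearMap.id : A →ₗ[k] A) (ι₁ k A A)) ∘ₗ G.Δ)
    (TensorProduct.map ((ι₁ k A (A ⊗[k] A)) ∘ₗ F.S)
      ((TensorProduct.map (LinearMap.id : A →ₗ[k] A) (ι₂ k A A)) ∘ₗ G.Δ))

lemma claimA (F G : HopfStruct k A) (hcomm : ∀ x y : A, x * y = y * x)
    (hcompat : ∀ h : A, braceLHS k A F.Δ G.Δ h = braceRHS k A F.Δ G.Δ F.S h) :
    TensorProduct.map (LinearMap.id : A →ₗ[k] A) F.Δ ∘ₗ ρmap k A F.Δ G.Δ F.S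
      = comodCoalgRHS k A A F.Δ (ρmap k A F.Δ G.Δ F.S) := by
  have mA : (TensorProduct.map (LinearMap.id : A →ₗ[k] A) F.Δ) ∘ₗ LinearMap.mul' k (A ⊗[k] A)
      = LinearMap.mul' k (A ⊗[k] (A ⊗[k] A))
        ∘ₗ (TensorProduct.map (TensorProduct.map LinearMap.id F.Δ)
            (TensorProduct.map LinearMap.id F.Δ)) := by
    apply TensorProduct.ext'; intro u v
    simp only [LinearMap.comp_apply, LinearMap.mul'_apply, TensorProduct.map_tmul]
    exact map_mul_of_mul LinearMap.id F.Δ (fun _ _ => rfl) F.comul_mul u v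
  have mB : (TensorProduct.map (LinearMap.id : A →ₗ[k] A) F.Δ) ∘ₗ (ι₁ k A A)
      = ι₁ k A (A ⊗[k] A) := by
    apply LinearMap.ext; intro x
    simp [F.comul_one]
  have compatm : TensorProduct.map (LinearMap.id : A →ₗ[k] A) F.Δ ∘ₗ G.Δ
      = braceRHS k A F.Δ G.Δ F.S := LinearMap.ext hcompat
  have co1 : TensorProduct.map (LinearMap.id : A →ₗ[k] A) F.Δ ∘ₗ F.Δ
      = (TensorProduct.assoc k A A A).toLinearMap
        ∘ₗ TensorProduct.map F.Δ LinearMap.id ∘ₗ F.Δ := by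
    apply LinearMap.ext; intro a
    simpa using F.coassoc a
  have nat : TensorProduct.map (LinearMap.id : A →ₗ[k] A)
        (TensorProduct.map (LinearMap.id : A →ₗ[k] A) F.Δ)
      ∘ₗ (TensorProduct.assoc k A A A).toLinearMap
      = (TensorProduct.assoc k A A (A ⊗[k] A)).toLinearMap
        ∘ₗ TensorProduct.map (LinearMap.id : A ⊗[k] A →ₗ[k] A ⊗[k] A) F.Δ := by
    ext x y z
    simp
  have D3eq : TensorProduct.map (LinearMap.id : A →ₗ[k] A)
        (TensorProduct.map (LinearMap.id : A →ₗ[k] A) F.Δ ∘ₗ F.Δ) ∘ₗ F.Δ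
      = (TensorProduct.assoc k A A (A ⊗[k] A)).toLinearMap
        ∘ₗ TensorProduct.map F.Δ F.Δ ∘ₗ F.Δ := by
    have s1 : TensorProduct.map (LinearMap.id : A →ₗ[k] A)
          (TensorProduct.map (LinearMap.id : A →ₗ[k] A) F.Δ ∘ₗ F.Δ)
        = TensorProduct.map LinearMap.id (TensorProduct.map LinearMap.id F.Δ)
          ∘ₗ TensorProduct.map LinearMap.id F.Δ := by
      rw [← TensorProduct.map_comp, LinearMap.id_comp]
    rw [s1, LinearMap.comp_assoc, co1, ← LinearMap.comp_assoc, ← LinearMap.comp_assoc, nat]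
    have s2 : (TensorProduct.map (LinearMap.id : A ⊗[k] A →ₗ[k] A ⊗[k] A) F.Δ)
        ∘ₗ TensorProduct.map F.Δ (LinearMap.id : A →ₗ[k] A)
        = TensorProduct.map F.Δ F.Δ := by
      rw [← TensorProduct.map_comp, LinearMap.id_comp, LinearMap.comp_id]
    apply LinearMap.ext; intro b
    simp only [LinearMap.comp_apply, LinearEquiv.coe_toLinearMap]
    rw [← LinearMap.comp_apply (TensorProduct.map (LinearMap.id : A ⊗[k] A →ₗ[k] A ⊗[k] A) F.Δ)
      (TensorProduct.map F.Δ (LinearMap.id : A →ₗ[k] A)), s2]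
  have FE : LinearMap.mul' k (A ⊗[k] (A ⊗[k] A))
      ∘ₗ (TensorProduct.map ((ι₁ k A (A ⊗[k] A)) ∘ₗ F.S)
            (mul₃ k (A ⊗[k] (A ⊗[k] A)) ∘ₗ BigMapD F G))
      ∘ₗ (TensorProduct.assoc k A A (A ⊗[k] A)).toLinearMap
      = LinearMap.mul' k (A ⊗[k] (A ⊗[k] A)) ∘ₗ TensorProduct.map (P1D F G) (P2D F G) := by
    ext x y z w
    simp only [LinearMap.comp_apply, LinearEquiv.coe_toLinearMap, TensorProduct.assoc_tmul,
      TensorProduct.map_tmul, LinearMap.mul'_apply, P1D, P2D, BigMapD, ι₁_apply, ι₂_apply,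
      LinearMap.id_apply, TensorProduct.curry_apply, LinearMap.coe_restrictScalars,
      TensorProduct.AlgebraTensorModule.curry_apply]
    rw [map_mul_of_mul (LinearMap.id : A →ₗ[k] A) (ι₁ k A A) (fun _ _ => rfl)
        (fun a b => by simp [Algebra.TensorProduct.tmul_mul_tmul]) (F.S x ⊗ₜ[k] (1 : A)) (G.Δ y),
      map_mul_of_mul (LinearMap.id : A →ₗ[k] A) (ι₂ k A A) (fun _ _ => rfl)
        (fun a b => by simp [Algebra.TensorProduct.tmul_mul_tmul]) (F.S z ⊗ₜ[k] (1 : A)) (G.Δ w)]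
    simp only [TensorProduct.map_tmul, LinearMap.id_apply, ι₁_apply, ι₂_apply, mul₃_tmul,
      Algebra.TensorProduct.one_def]
    rw [mul_assoc]
  -- assembly
  have c1 : (TensorProduct.map (TensorProduct.map (LinearMap.id : A →ₗ[k] A) F.Δ)
        (TensorProduct.map (LinearMap.id : A →ₗ[k] A) F.Δ))
      ∘ₗ (TensorProduct.map ((ι₁ k A A) ∘ₗ F.S) G.Δ)
      = TensorProduct.map ((ι₁ k A (A ⊗[k] A)) ∘ₗ F.S)
          (braceRHS k A F.Δ G.Δ F.S) := by
    rw [← TensorProduct.map_comp, ← compatm]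
    congr 1
    rw [← LinearMap.comp_assoc, mB]
  have c2 : TensorProduct.map ((ι₁ k A (A ⊗[k] A)) ∘ₗ F.S) (braceRHS k A F.Δ G.Δ F.S)
      = (TensorProduct.map ((ι₁ k A (A ⊗[k] A)) ∘ₗ F.S)
          (mul₃ k (A ⊗[k] (A ⊗[k] A)) ∘ₗ BigMapD F G))
        ∘ₗ TensorProduct.map (LinearMap.id : A →ₗ[k] A)
            (TensorProduct.map (LinearMap.id : A →ₗ[k] A) F.Δ ∘ₗ F.Δ) := by
    rw [← TensorProduct.map_comp, LinearMap.comp_id]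
    rfl
  have c3 : TensorProduct.map
        ((TensorProduct.map (LinearMap.id : A →ₗ[k] A) (ι₁ k A A)) ∘ₗ ρmap k A F.Δ G.Δ F.S)
        ((TensorProduct.map (LinearMap.id : A →ₗ[k] A) (ι₂ k A A)) ∘ₗ ρmap k A F.Δ G.Δ F.S)
      = (TensorProduct.map (P1D F G) (P2D F G)) ∘ₗ TensorProduct.map F.Δ F.Δ := by
    rw [← TensorProduct.map_comp]
    rfl
  apply LinearMap.ext; intro a
  show TensorProduct.map LinearMap.id F.Δ
      (LinearMap.mul' k (A ⊗[k] A) (TensorProduct.map ((ι₁ k A A) ∘ₗ F.S) G.Δ (F.Δ a))) = _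
  have e_mA := LinearMap.congr_fun mA (TensorProduct.map ((ι₁ k A A) ∘ₗ F.S) G.Δ (F.Δ a))
  simp only [LinearMap.comp_apply] at e_mA
  rw [e_mA]
  have e_c1 := LinearMap.congr_fun c1 (F.Δ a)
  simp only [LinearMap.comp_apply] at e_c1
  rw [e_c1]
  have e_c2 := LinearMap.congr_fun c2 (F.Δ a)
  simp only [LinearMap.comp_apply] at e_c2
  rw [e_c2]
  have e_d3 := LinearMap.congr_fun D3eq a
  simp only [LinearMap.comp_apply, LinearEquiv.coe_toLinearMap] at e_d3
  rw [e_d3]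
  have e_FE := LinearMap.congr_fun FE (TensorProduct.map F.Δ F.Δ (F.Δ a))
  simp only [LinearMap.comp_apply, LinearEquiv.coe_toLinearMap] at e_FE
  rw [e_FE]
  show _ = LinearMap.mul' k (A ⊗[k] (A ⊗[k] A))
    (TensorProduct.map
      ((TensorProduct.map (LinearMap.id : A →ₗ[k] A) (ι₁ k A A)) ∘ₗ ρmap k A F.Δ G.Δ F.S)
      ((TensorProduct.map (LinearMap.id : A →ₗ[k] A) (ι₂ k A A)) ∘ₗ ρmap k A F.Δ G.Δ F.S)
      (F.Δ a))
  rw [c3]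
  rfl

end Claims

/-- Lemma 2.8(3).  Let `(A, Δ, Δ')` be a commutative Hopf
brace with antipode `S` for `Δ` and `ρ(a) = S(a_1) a_{21'} ⊗ a_{22'}`.  Then
`(id ⊗ S) ∘ ρ = ρ ∘ S`, i.e. `a_{(-1)} ⊗ S(a_{(0)}) = (S(a))_{(-1)} ⊗ (S(a))_{(0)}`. -/
theorem lemma_2_8_3 {k : Type*} [Field k] {A : Type*} [Ring A] [Algebra k A]
    (HB : HopfBrace k A) (hcomm : ∀ x y : A, x * y = y * x) :
    ∀ a : A,
      TensorProduct.map (LinearMap.id : A →ₗ[k] A) HB.fst.S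
          (ρmap k A HB.fst.Δ HB.snd.Δ HB.fst.S a)
        = ρmap k A HB.fst.Δ HB.snd.Δ HB.fst.S (HB.fst.S a) := by
  obtain ⟨F, G, hcompat⟩ := HB
  intro a
  have hq : conv F.Δ (ρmap k A F.Δ G.Δ F.S)
      (TensorProduct.map (LinearMap.id : A →ₗ[k] A) F.S ∘ₗ ρmap k A F.Δ G.Δ F.S)
      = (cunit F.ε : A →ₗ[k] A ⊗[k] A) := by
    have ΨX : (TensorProduct.map (LinearMap.id : A →ₗ[k] A)
          (LinearMap.mul' k A ∘ₗ TensorProduct.map LinearMap.id F.S))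
        ∘ₗ LinearMap.mul' k (A ⊗[k] (A ⊗[k] A))
        ∘ₗ (TensorProduct.map
            (TensorProduct.map (LinearMap.id : A →ₗ[k] A) (ι₁ k A A))
            (TensorProduct.map (LinearMap.id : A →ₗ[k] A) (ι₂ k A A)))
        = LinearMap.mul' k (A ⊗[k] A)
          ∘ₗ (TensorProduct.map (LinearMap.id : A ⊗[k] A →ₗ[k] A ⊗[k] A)
              (TensorProduct.map LinearMap.id F.S)) := by
      ext x y z w
      simp
    apply LinearMap.ext; intro b
    rw [conv_apply]
    have d : TensorProduct.map (ρmap k A F.Δ G.Δ F.S)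
        (TensorProduct.map (LinearMap.id : A →ₗ[k] A) F.S ∘ₗ ρmap k A F.Δ G.Δ F.S)
        = (TensorProduct.map (LinearMap.id : A ⊗[k] A →ₗ[k] A ⊗[k] A)
            (TensorProduct.map LinearMap.id F.S))
          ∘ₗ TensorProduct.map (ρmap k A F.Δ G.Δ F.S) (ρmap k A F.Δ G.Δ F.S) := by
      rw [← TensorProduct.map_comp, LinearMap.id_comp]
    rw [d]
    simp only [LinearMap.comp_apply]
    have eΨ := LinearMap.congr_fun ΨX
      (TensorProduct.map (ρmap k A F.Δ G.Δ F.S) (ρmap k A F.Δ G.Δ F.S) (F.Δ b))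
    simp only [LinearMap.comp_apply] at eΨ
    rw [← eΨ]
    have d2 : (TensorProduct.map
          (TensorProduct.map (LinearMap.id : A →ₗ[k] A) (ι₁ k A A))
          (TensorProduct.map (LinearMap.id : A →ₗ[k] A) (ι₂ k A A)))
        ∘ₗ (TensorProduct.map (ρmap k A F.Δ G.Δ F.S) (ρmap k A F.Δ G.Δ F.S))
        = TensorProduct.map
            ((TensorProduct.map (LinearMap.id : A →ₗ[k] A) (ι₁ k A A)) ∘ₗ ρmap k A F.Δ G.Δ F.S)
            ((TensorProduct.map (LinearMap.id : A →ₗ[k] A) (ι₂ k A A)) ∘ₗ ρmap k A F.Δ G.Δ F.S) :=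
      (TensorProduct.map_comp _ _ _ _).symm
    have ed2 := LinearMap.congr_fun d2 (F.Δ b)
    simp only [LinearMap.comp_apply] at ed2
    rw [ed2]
    have ecc : LinearMap.mul' k (A ⊗[k] (A ⊗[k] A))
        (TensorProduct.map
          ((TensorProduct.map (LinearMap.id : A →ₗ[k] A) (ι₁ k A A)) ∘ₗ ρmap k A F.Δ G.Δ F.S)
          ((TensorProduct.map (LinearMap.id : A →ₗ[k] A) (ι₂ k A A)) ∘ₗ ρmap k A F.Δ G.Δ F.S)
          (F.Δ b))
        = comodCoalgRHS k A A F.Δ (ρmap k A F.Δ G.Δ F.S) b := rfl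
    rw [ecc, ← claimA F G hcomm hcompat]
    simp only [LinearMap.comp_apply]
    have d3 : (TensorProduct.map (LinearMap.id : A →ₗ[k] A)
          (LinearMap.mul' k A ∘ₗ TensorProduct.map LinearMap.id F.S))
        ∘ₗ (TensorProduct.map (LinearMap.id : A →ₗ[k] A) F.Δ)
        = TensorProduct.map (LinearMap.id : A →ₗ[k] A) (Algebra.linearMap k A ∘ₗ F.ε) := by
      rw [← TensorProduct.map_comp, LinearMap.id_comp]
      congr 1
      apply LinearMap.ext; intro c
      exact F.antipode_right c
    have ed3 := LinearMap.congr_fun d3 (ρmap k A F.Δ G.Δ F.S b)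
    simp only [LinearMap.comp_apply] at ed3
    rw [ed3]
    have eB := LinearMap.congr_fun (claimB F G hcompat) b
    simp only [LinearMap.comp_apply] at eB
    rw [eB]
  have h2 : conv F.Δ ((ρmap k A F.Δ G.Δ F.S) ∘ₗ F.S) (ρmap k A F.Δ G.Δ F.S)
      = (cunit F.ε : A →ₗ[k] A ⊗[k] A) :=
    algmor_conv_left F (ρmap k A F.Δ G.Δ F.S) (ρ_mul F G hcomm) (ρ_one F G)
  have huniq := conv_inv_unique F.Δ F.ε F.coassoc F.counit_left F.counit_right hq h2
  have := LinearMap.congr_fun huniq a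
  simp only [LinearMap.comp_apply] at this
  exact this.symm

end HopfPaper
end
end
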